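/- arXiv:2501.12350 — 2 statements merged into one kernel-verified Lean document; each statement's English description precedes it below -/
import Mathlib

section
/- In the Riordan Hopf algebra Rio, for any s ∈ K and k ∈ Z_{≥0}, the following identity of power series in x with coefficients in Rio ⊗ Rio holds (Δ applied coefficientwise): Δ(Y(x)^s Π(x)^k) = Σ_{j≥0} Y(x)^s Π(x)^j ⊗ [x^j](Y(x)^s Π(x)^k). -/
open scoped TensorProduct

namespace CK

/-! ### Decorated rooted trees, represented by finite prefix-closed sets of addresses.

A vertex is an address `v : List ℕ` (the root is `[]`, children of `v` are `v ++ [n]`).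
The partial order of the tree: `u ≤ v` iff `v` is a prefix of `u` (the root is the maximum).
`vdec v` is the decoration of the vertex `v`, and `edec v` is the decoration of the edge
joining a non-root vertex `v` to its parent, recorded together with the decoration of the
parent (an element of `Σ i, E i`). -/
structure PreTree (I : Type) (E : I → Type) : Type where
  supp : Finset (List ℕ)
  vdec : List ℕ → I
  edec : List ℕ → Option (Σ i : I, E i)

variable {I : Type} {E : I → Type}

/-- Well-formedness: the root address belongs to the tree, the support is closed under
prefixes, and the decoration of the edge from `u` to its child `u ++ [n]` is of the form
`⟨vdec u, e⟩` with `e : E (vdec u)`. -/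
def PreTree.WF (t : PreTree I E) : Prop :=
  ([] ∈ t.supp) ∧
  (∀ v ∈ t.supp, ∀ w : List ℕ, w <+: v → w ∈ t.supp) ∧
  (∀ (u : List ℕ) (n : ℕ), u ++ [n] ∈ t.supp →
    ∃ e : E (t.vdec u), t.edec (u ++ [n]) = some ⟨t.vdec u, e⟩)

/-- Isomorphism of decorated rooted trees: a bijection of the vertex sets preserving the
root, the tree structure and the decorations of vertices and edges. -/
def PreTree.Iso (t s : PreTree I E) : Prop :=
  ∃ f : List ℕ → List ℕ,
    Set.BijOn f ↑t.supp ↑s.supp ∧ f [] = [] ∧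
    (∀ (u : List ℕ) (n : ℕ), u ++ [n] ∈ t.supp → ∃ m : ℕ, f (u ++ [n]) = f u ++ [m]) ∧
    (∀ v ∈ t.supp, s.vdec (f v) = t.vdec v) ∧
    (∀ v ∈ t.supp, v ≠ [] → s.edec (f v) = t.edec v)

/-- Well-formed decorated rooted trees. -/
def WFTree (I : Type) (E : I → Type) : Type := {t : PreTree I E // t.WF}

/-- Isomorphism classes of (well-formed) decorated rooted trees. -/
def TreeCl (I : Type) (E : I → Type) : Type := Quot fun a b : WFTree I E => a.1.Iso b.1

/-- Isomorphism classes of decorated rooted forests: multisets of tree classes. -/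
def Forest (I : Type) (E : I → Type) : Type := Multiset (TreeCl I E)

instance : AddCancelCommMonoid (Forest I E) := inferInstanceAs (AddCancelCommMonoid (Multiset (TreeCl I E)))
instance : DecidableEq (List ℕ) := inferInstance

/-- The class of a well-formed tree. -/
def toCl (t : PreTree I E) (h : t.WF) : TreeCl I E := Quot.mk _ ⟨t, h⟩

/-- A representative of an isomorphism class of trees. -/
noncomputable def rep (c : TreeCl I E) : PreTree I E := (Quot.out c).1

theorem rep_wf (c : TreeCl I E) : (rep c).WF := (Quot.out c).2

/-- The decoration of the root of (a representative of) a tree class. -/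
noncomputable def rootDec (c : TreeCl I E) : I := (rep c).vdec []

/-- The children of a vertex `v` in a tree. -/
def childrenAt (t : PreTree I E) (v : List ℕ) : Finset (List ℕ) :=
  t.supp.filter fun c => c ≠ [] ∧ c.dropLast = v

/-- Total weight of a tree with respect to a weight function on the vertex decorations. -/
def wtPre (w : I → ℕ) (t : PreTree I E) : ℕ := ∑ v ∈ t.supp, w (t.vdec v)

noncomputable def wtCl (w : I → ℕ) (c : TreeCl I E) : ℕ := wtPre w (rep c)

/-- The automorphisms of a decorated rooted tree: bijections of the vertex set fixing the
root, preserving the covering relation (children map to children) and all decorations. -/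
def AutSet (t : PreTree I E) : Set ({v // v ∈ t.supp} ≃ {v // v ∈ t.supp}) :=
  {g | (∀ h : ([] : List ℕ) ∈ t.supp, (g ⟨[], h⟩).1 = []) ∧
    (∀ (u : List ℕ) (n : ℕ) (hu : u ∈ t.supp) (h : u ++ [n] ∈ t.supp),
      ∃ m : ℕ, (g ⟨u ++ [n], h⟩).1 = (g ⟨u, hu⟩).1 ++ [m]) ∧
    (∀ (v : List ℕ) (h : v ∈ t.supp), t.vdec (g ⟨v, h⟩).1 = t.vdec v) ∧
    (∀ (v : List ℕ) (h : v ∈ t.supp), v ≠ [] → t.edec (g ⟨v, h⟩).1 = t.edec v)}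

/-- The order of the automorphism group of a decorated rooted tree. -/
noncomputable def autCard (t : PreTree I E) : ℕ := (AutSet t).ncard

noncomputable def autCardCl (c : TreeCl I E) : ℕ := autCard (rep c)

end CK
namespace CK

variable {I : Type} {E : I → Type}

/-- Grafting at the level of raw trees: given a root decoration `i` and a list of pairs
(edge decoration, tree), form the tree whose root is decorated `i` and whose `j`-th root
edge carries the `j`-th edge decoration and leads to the `j`-th tree. -/
def graftPre (i : I) (l : List (E i × PreTree I E)) : PreTree I E where
  supp := insert [] ((Finset.range l.length).biUnion fun j =>
    ((l[j]?.elim ∅ fun p => p.2.supp).image fun v => j :: v))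
  vdec v :=
    match v with
    | [] => i
    | j :: v' => (l[j]?.elim i fun p => p.2.vdec v')
  edec v :=
    match v with
    | [] => none
    | j :: v' => (l[j]?.elim none fun p =>
        if v' = [] then some ⟨i, p.1⟩ else p.2.edec v')

theorem mem_graftPre_supp (i : I) (l : List (E i × PreTree I E)) (v : List ℕ) :
    v ∈ (graftPre i l).supp ↔
      v = [] ∨ ∃ j : ℕ, j < l.length ∧ ∃ v' : List ℕ,
        v = j :: v' ∧ v' ∈ (l[j]?.elim ∅ fun p => p.2.supp) := by
  simp only [graftPre, Finset.mem_insert, Finset.mem_biUnion, Finset.mem_range,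
    Finset.mem_image]
  constructor
  · rintro (h | ⟨j, hj, v', hv', rfl⟩)
    · exact Or.inl h
    · exact Or.inr ⟨j, hj, v', rfl, hv'⟩
  · rintro (h | ⟨j, hj, v', rfl, hv'⟩)
    · exact Or.inl h
    · exact Or.inr ⟨j, hj, v', hv', rfl⟩

theorem graftPre_wf (i : I) (l : List (E i × PreTree I E))
    (hl : ∀ p ∈ l, p.2.WF) : (graftPre i l).WF := by
  refine ⟨Finset.mem_insert_self _ _, ?_, ?_⟩
  · intro v hv w hw
    rw [mem_graftPre_supp] at hv ⊢
    rcases hv with rfl | ⟨j, hj, v', rfl, hv'⟩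
    · left; exact List.prefix_nil.mp hw
    · rcases w with _ | ⟨a, w'⟩
      · exact Or.inl rfl
      · rw [List.cons_prefix_cons] at hw
        obtain ⟨rfl, hw'⟩ := hw
        right
        refine ⟨a, hj, w', rfl, ?_⟩
        have hget : l[a]? = some l[a] := List.getElem?_eq_getElem hj
        simp only [hget, Option.elim_some] at hv' ⊢
        exact (hl _ (List.getElem_mem hj)).2.1 v' hv' w' hw'
  · intro u n hun
    rw [mem_graftPre_supp] at hun
    rcases hun with h | ⟨j, hj, v', hv, hv'⟩
    · simp at h
    · have hget : l[j]? = some l[j] := List.getElem?_eq_getElem hj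
      simp only [hget, Option.elim_some] at hv'
      rcases u with _ | ⟨a, u'⟩
      · simp only [List.nil_append] at hv
        obtain ⟨rfl, rfl⟩ := List.cons.inj hv
        exact ⟨l[n].1, by simp [graftPre, hget]⟩
      · have hv2 : a :: (u' ++ [n]) = j :: v' := by simpa using hv
        obtain ⟨rfl, rfl⟩ := List.cons.inj hv2
        obtain ⟨e, he⟩ := (hl _ (List.getElem_mem hj)).2.2 u' n hv'
        have hvd : (graftPre i l).vdec (a :: u') = l[a].2.vdec u' := by
          simp [graftPre, hget]
        have hed : (graftPre i l).edec ((a :: u') ++ [n]) = l[a].2.edec (u' ++ [n]) := by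
          simp only [List.cons_append]
          simp [graftPre, hget]
        rw [hvd, hed]
        exact ⟨e, he⟩

end CK
namespace CK

variable {I : Type} {E : I → Type}

theorem graftList_wf (i : I) [Fintype (E i)] (fv : E i → Forest I E) :
    ∀ p ∈ ((Finset.univ : Finset (E i)).toList.flatMap fun e =>
      (fv e).toList.map fun c => (e, rep c)), p.2.WF := by
  intro p hp
  simp only [List.mem_flatMap, List.mem_map] at hp
  obtain ⟨e, -, c, -, rfl⟩ := hp
  exact rep_wf c

/-- Grafting at the level of isomorphism classes: `graftF i fv` is (the class of) the tree
obtained from the disjoint union of the forests `fv e`, `e : E i`, by adjoining a new root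
decorated `i`, joined to the root of every component of `fv e` by an edge decorated `e`. -/
noncomputable def graftF (i : I) [Fintype (E i)] (fv : E i → Forest I E) : TreeCl I E :=
  toCl (graftPre i ((Finset.univ : Finset (E i)).toList.flatMap fun e =>
      (fv e).toList.map fun c => (e, rep c)))
    (graftPre_wf _ _ (graftList_wf i fv))

/-- The subtree (principal downset) of `t` rooted at the vertex `r`, with addresses
relative to `r`. -/
def subPre (t : PreTree I E) (r : List ℕ) : PreTree I E where
  supp := insert [] ((t.supp.filter fun v => r <+: v).image fun v => v.drop r.length)
  vdec v := t.vdec (r ++ v)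
  edec v := if v = [] then none else t.edec (r ++ v)

theorem subPre_wf (t : PreTree I E) (ht : t.WF) (r : List ℕ) : (subPre t r).WF := by
  refine ⟨Finset.mem_insert_self _ _, ?_, ?_⟩
  · intro v hv w hw
    simp only [subPre, Finset.mem_insert, Finset.mem_image, Finset.mem_filter] at hv ⊢
    rcases hv with rfl | ⟨v0, ⟨hv0, hr⟩, rfl⟩
    · left; exact List.prefix_nil.mp hw
    · right
      refine ⟨r ++ w, ⟨?_, List.prefix_append _ _⟩, by simp⟩
      obtain ⟨v1, rfl⟩ := hr
      simp only [List.drop_left] at hw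
      exact ht.2.1 _ hv0 _ ((List.prefix_append_right_inj r).mpr hw)
  · intro u n hun
    simp only [subPre, Finset.mem_insert, Finset.mem_image, Finset.mem_filter] at hun
    rcases hun with h | ⟨v0, ⟨hv0, hr⟩, hdrop⟩
    · simp at h
    · obtain ⟨v1, rfl⟩ := hr
      simp only [List.drop_left] at hdrop
      subst hdrop
      obtain ⟨e, he⟩ := ht.2.2 (r ++ u) n (by rw [← List.append_assoc] at hv0; exact hv0)
      refine ⟨e, ?_⟩
      show (if u ++ [n] = [] then none else t.edec (r ++ (u ++ [n]))) = _
      rw [if_neg (by simp), ← List.append_assoc]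
      exact he

noncomputable def subCl (t : PreTree I E) (ht : t.WF) (r : List ℕ) : TreeCl I E :=
  toCl (subPre t r) (subPre_wf t ht r)

/-- `D` is a nonempty-complement downset of the tree `t`:
a subset of the vertices closed under passing to descendants, not containing the root. -/
def IsCut (t : PreTree I E) (D : Finset (List ℕ)) : Prop :=
  D ⊆ t.supp ∧ ∀ v ∈ D, ∀ w ∈ t.supp, v <+: w → w ∈ D

/-- Remove a downset from a tree. -/
def complPre (t : PreTree I E) (D : Finset (List ℕ)) : PreTree I E where
  supp := insert [] (t.supp \ D)
  vdec := t.vdec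
  edec v := if v = [] then none else t.edec v

theorem complPre_wf (t : PreTree I E) (ht : t.WF) (D : Finset (List ℕ))
    (hD : ∀ v ∈ D, ∀ w ∈ t.supp, v <+: w → w ∈ D) : (complPre t D).WF := by
  refine ⟨Finset.mem_insert_self _ _, ?_, ?_⟩
  · intro v hv w hw
    simp only [complPre, Finset.mem_insert, Finset.mem_sdiff] at hv ⊢
    rcases hv with rfl | ⟨hv1, hv2⟩
    · left; exact List.prefix_nil.mp hw
    · rcases eq_or_ne w [] with rfl | hne
      · exact Or.inl rfl
      · right
        refine ⟨ht.2.1 v hv1 w hw, fun hwD => hv2 (hD w hwD v hv1 hw)⟩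
  · intro u n hun
    simp only [complPre, Finset.mem_insert, Finset.mem_sdiff] at hun
    rcases hun with h | ⟨h1, h2⟩
    · simp at h
    · obtain ⟨e, he⟩ := ht.2.2 u n h1
      refine ⟨e, ?_⟩
      show (if u ++ [n] = [] then none else t.edec (u ++ [n])) = _
      rw [if_neg (by simp)]
      exact he

noncomputable def complCl (t : PreTree I E) (ht : t.WF) (D : Finset (List ℕ))
    (hD : ∀ v ∈ D, ∀ w ∈ t.supp, v <+: w → w ∈ D) : TreeCl I E :=
  toCl (complPre t D) (complPre_wf t ht D hD)

/-- The forest induced by a downset `D` of a tree: one subtree for each minimal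
element of `D`. -/
noncomputable def downForest (t : PreTree I E) (ht : t.WF) (D : Finset (List ℕ)) :
    Forest I E :=
  ((D.filter fun r => r = [] ∨ r.dropLast ∉ D).val.map fun r => subCl t ht r)

instance : Singleton (TreeCl I E) (Forest I E) :=
  inferInstanceAs (Singleton (TreeCl I E) (Multiset (TreeCl I E)))

/-- All terms `(D, t ∖ D)` of the coproduct of a tree class `c`: `D` runs over the
downsets of (a representative of) `c`; the first component is the forest induced by `D`
and the second the complementary forest. -/
noncomputable def cutsTree (c : TreeCl I E) : Multiset (Forest I E × Forest I E) :=
  ((rep c).supp.powerset.val.map fun D =>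
    if hD : ∀ v ∈ D, ∀ w ∈ (rep c).supp, v <+: w → w ∈ D then
      ({(downForest (rep c) (rep_wf c) D,
         if ([] : List ℕ) ∈ D then 0 else {complCl (rep c) (rep_wf c) D hD})} :
        Multiset (Forest I E × Forest I E))
    else 0).sum

/-- All terms of the coproduct of a forest: products of cuts of the component trees. -/
noncomputable def cutsForest (f : Forest I E) : Multiset (Forest I E × Forest I E) :=
  f.toList.foldr (fun c acc =>
    (cutsTree c).bind fun p => acc.map fun q => (p.1 + q.1, p.2 + q.2)) {(0, 0)}

end CK
namespace CK

open scoped TensorProduct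

variable (K : Type) [Field K] [CharZero K]
variable {I : Type} {E : I → Type}

/-- The decorated Connes–Kreimer Hopf algebra: the free vector space on isomorphism
classes of decorated forests, with disjoint union of forests as multiplication. -/
abbrev HCK (I : Type) (E : I → Type) : Type := AddMonoidAlgebra K (Forest I E)

/-- The basis element of `HCK` given by a forest. -/
noncomputable def bF (f : Forest I E) : HCK K I E := AddMonoidAlgebra.single f 1

/-- The basis element of `HCK` given by a single tree. -/
noncomputable def bT (c : TreeCl I E) : HCK K I E := bF K ({c} : Forest I E)

/-- The coefficient of a forest in an element of `HCK`. -/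
noncomputable def coeF (h : HCK K I E) (f : Forest I E) : K := h.coeff f

/-- The coproduct of the Connes–Kreimer Hopf algebra: on a basis forest `F` it is the sum
of `D ⊗ (F ∖ D)` over all downsets `D` of `F`. -/
noncomputable def comulCK : HCK K I E →ₗ[K] HCK K I E ⊗[K] HCK K I E :=
  (Finsupp.lsum K fun f => LinearMap.toSpanSingleton K _
    (((cutsForest f).map fun p => bF K p.1 ⊗ₜ[K] bF K p.2).sum)) ∘ₗ
    (AddMonoidAlgebra.coeffLinearEquiv K).toLinearMap

open scoped Classical in
/-- The counit of the Connes–Kreimer Hopf algebra. -/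
noncomputable def counitCK : HCK K I E →ₗ[K] K :=
  (Finsupp.lsum K fun f => LinearMap.toSpanSingleton K _ (if f = 0 then (1 : K) else 0)) ∘ₗ
    (AddMonoidAlgebra.coeffLinearEquiv K).toLinearMap

/-- The grafting operator `B₊^{(i)}` evaluated on a tuple of basis forests, extended to a
function of tuples of arbitrary elements of `HCK` by multilinearity.  This realizes the
linear map `H^{⊗ E_i} → H` on the tensor power. -/
noncomputable def Bapp (i : I) [Fintype (E i)] (h : E i → HCK K I E) : HCK K I E :=
  ∑ᶠ fv : E i → Forest I E,
    (∏ e : E i, coeF K (h e) (fv e)) • bT K (graftF i fv)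

/-- The grafting operator for a single insertion place, as a linear map. -/
noncomputable def Bop (i : I) [Fintype (E i)] : HCK K I E →ₗ[K] HCK K I E :=
  (Finsupp.lsum K fun f => LinearMap.toSpanSingleton K _ (bT K (graftF i (fun _ => f)))) ∘ₗ
    (AddMonoidAlgebra.coeffLinearEquiv K).toLinearMap

end CK
namespace CK

open scoped TensorProduct
open PowerSeries

variable (K : Type) [Field K] [CharZero K]

/-- Falling factorial `u(u-1)⋯(u-m+1)` of a scalar. -/
def ffall (u : K) (m : ℕ) : K := ∏ k ∈ Finset.range m, (u - k)

/-- Generalized binomial coefficient `u(u-1)⋯(u-m+1)/m!`. -/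
noncomputable def binomC (u : K) (m : ℕ) : K := ffall K u m / (Nat.factorial m : K)

variable {K}

/-- Vector falling factorial `μ^{\underline α} = ∏ⱼ μⱼ(μⱼ-1)⋯(μⱼ-αⱼ+1)`. -/
def ffallVec {J : Type} [Fintype J] (μ : J → K) (α : J → ℕ) : K :=
  ∏ j : J, ffall K (μ j) (α j)

section BinomPow

variable {H : Type} [CommRing H] [Algebra K H]

/-- Binomial series power `F^u = Σ_m (u choose m) (F-1)^m` of a power series
(intended for `F` with constant term 1). -/
noncomputable def binomPow (u : K) (F : PowerSeries H) : PowerSeries H :=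
  PowerSeries.mk fun n =>
    ∑ m ∈ Finset.range (n + 1), binomC K u m • (PowerSeries.coeff n ((F - 1) ^ m))

/-- Apply a linear map coefficientwise to a power series. -/
noncomputable def lapp {M N : Type} [Semiring M] [Semiring N] [Module K M] [Module K N]
    (φ : M →ₗ[K] N) (S : PowerSeries M) : PowerSeries N :=
  PowerSeries.mk fun n => φ (PowerSeries.coeff n S)

end BinomPow

section PolyHopf

variable (K)

/-- The coproduct of the polynomial Hopf algebra `K[L]`, determined by
`Δ L = L ⊗ 1 + 1 ⊗ L`. -/
noncomputable def comulL : Polynomial K →ₐ[K] Polynomial K ⊗[K] Polynomial K :=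
  Polynomial.aeval (Polynomial.X ⊗ₜ[K] 1 + 1 ⊗ₜ[K] Polynomial.X)

/-- The counit of the polynomial Hopf algebra `K[L]`, i.e. evaluation at `L = 0`. -/
noncomputable def counitL : Polynomial K →ₐ[K] K := Polynomial.aeval 0

/-- A linear endomorphism of `K[L]` is a 1-cocycle if `Δ ∘ Λ = Λ ⊗ 1 + (id ⊗ Λ) ∘ Δ`. -/
def IsCocycleL (Λ : Polynomial K →ₗ[K] Polynomial K) : Prop :=
  ∀ f : Polynomial K,
    comulL K (Λ f) = Λ f ⊗ₜ[K] 1 + (TensorProduct.map LinearMap.id Λ) (comulL K f)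

variable (σ : Type) [Fintype σ] [DecidableEq σ]

/-- The comodule structure (coaction) of `K[L]` on `K[L_e : e ∈ σ]`, the `σ`-fold tensor
power of `K[L]`; it is the algebra morphism determined by `L_e ↦ L ⊗ 1 + 1 ⊗ L_e`. -/
noncomputable def coactMv :
    MvPolynomial σ K →ₐ[K] Polynomial K ⊗[K] MvPolynomial σ K :=
  MvPolynomial.aeval fun e => (Polynomial.X ⊗ₜ[K] 1 + 1 ⊗ₜ[K] MvPolynomial.X e)

/-- A linear map `K[L_e : e ∈ σ] → K[L]` is a 1-cocycle if
`Δ ∘ Λ = Λ ⊗ 1 + (id ⊗ Λ) ∘ δ` where `δ` is the coaction. -/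
def IsCocycleMv (Λ : MvPolynomial σ K →ₗ[K] Polynomial K) : Prop :=
  ∀ f : MvPolynomial σ K,
    comulL K (Λ f) = Λ f ⊗ₜ[K] 1 + (TensorProduct.map LinearMap.id Λ) (coactMv K σ f)

/-- The integro-differential operator
`f ↦ ∫₀^L A(∂/∂u_e : e ∈ σ) f |_{all u_e = u} du` associated with a formal power series
`A ∈ K[[L_e : e ∈ σ]]`. -/
noncomputable def intDiffOp (A : MvPowerSeries σ K) :
    MvPolynomial σ K →ₗ[K] Polynomial K :=
  (Finsupp.lsum K fun γ : σ →₀ ℕ => LinearMap.toSpanSingleton K _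
    (∑ᶠ α : σ →₀ ℕ,
      (MvPowerSeries.coeff α A *
        (∏ e ∈ γ.support ∪ α.support, ((γ e).descFactorial (α e) : K)) *
        (((γ - α).sum fun _ n => n) + 1 : K)⁻¹) •
      Polynomial.monomial (((γ - α).sum fun _ n => n) + 1) (1 : K))) ∘ₗ
    (AddMonoidAlgebra.coeffLinearEquiv K).toLinearMap

/-- Substitute `μ_e·L` for the variable `L_e` in a multivariate power series, obtaining a
single-variable power series. -/
noncomputable def diagSubst (μ : σ → K) (A : MvPowerSeries σ K) : PowerSeries K :=
  PowerSeries.mk fun n =>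
    ∑ᶠ α : σ →₀ ℕ, (if (α.sum fun _ m => m) = n then
      MvPowerSeries.coeff α A * ∏ e : σ, (μ e) ^ (α e) else 0)

/-- The single-variable integro-differential operator `f ↦ ∫₀^L A(d/du) f(u) du`. -/
noncomputable def intDiffOp1 (A : PowerSeries K) : Polynomial K →ₗ[K] Polynomial K :=
  LinearMap.comp (intDiffOp K Unit (fun α => PowerSeries.coeff (α ()) A))
    (MvPolynomial.pUnitAlgEquiv K).symm.toLinearMap

/-- `∂/∂L` applied coefficientwise to a power series (in `x`) with coefficients in `K[L]`. -/
noncomputable def dLs (G : PowerSeries (Polynomial K)) : PowerSeries (Polynomial K) :=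
  PowerSeries.mk fun n => Polynomial.derivative (PowerSeries.coeff n G)

/-- `∂/∂x` of a power series in `x`. -/
noncomputable def dXs {R : Type} [CommRing R] (G : PowerSeries R) : PowerSeries R :=
  PowerSeries.mk fun n => (n + 1 : ℕ) • PowerSeries.coeff (n + 1) G

/-- Embed a power series with coefficients in `K` into one with coefficients in `K[L]`. -/
noncomputable def liftC (b : PowerSeries K) : PowerSeries (Polynomial K) :=
  PowerSeries.map (Polynomial.C : K →+* Polynomial K) b

/-- The series of coefficients of `L` of a power series with coefficients in `K[L]`:
the anomalous dimension of a Green function. -/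
noncomputable def linCoeffSeries (G : PowerSeries (Polynomial K)) : PowerSeries K :=
  PowerSeries.mk fun n => (PowerSeries.coeff n G).coeff 1

/-- The renormalization group equation `(∂/∂L − β(x)·∂/∂x − γ(x)) G(x,L) = 0`. -/
def RGE (β γ : PowerSeries K) (G : PowerSeries (Polynomial K)) : Prop :=
  dLs K G = liftC K β * dXs G + liftC K γ * G

end PolyHopf

end CK
namespace CK

variable {I : Type} {E : I → Type}

/-! ### Tubings of rooted trees.

A tube of a rooted tree is a nonempty convex connected set of vertices; a binary tubing is
a maximal laminar family of tubes.  Recall that in our address representation the order of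
the tree is: `u ≤ v` iff `v` is a prefix of `u` (the root `[]` is the maximum). -/

/-- A tube: a nonempty convex connected subset of the vertices of `t`.  Equivalently, a
nonempty subset `S` of the vertices having a root `r` (an element of which all elements
of `S` are descendants) such that for any `v ∈ S` all vertices between `r` and `v` belong
to `S`. -/
def IsTube (t : PreTree I E) (S : Finset (List ℕ)) : Prop :=
  S.Nonempty ∧ S ⊆ t.supp ∧
    ∃ r ∈ S, (∀ v ∈ S, r <+: v) ∧
      (∀ v ∈ S, ∀ w : List ℕ, r <+: w → w <+: v → w ∈ S)

/-- A family of sets is laminar if any two members are nested or disjoint. -/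
def Laminar (τ : Finset (Finset (List ℕ))) : Prop :=
  ∀ A ∈ τ, ∀ B ∈ τ, A ⊆ B ∨ B ⊆ A ∨ Disjoint A B

/-- A binary tubing of a rooted tree: a maximal laminar family of tubes. -/
def IsBinaryTubing (t : PreTree I E) (τ : Finset (Finset (List ℕ))) : Prop :=
  (∀ S ∈ τ, IsTube t S) ∧ Laminar τ ∧
    ∀ τ' : Finset (Finset (List ℕ)),
      τ ⊆ τ' → (∀ S ∈ τ', IsTube t S) → Laminar τ' → τ' = τ

/-- The root of a tube: its unique element of minimal length. -/
noncomputable def tubeRoot (S : Finset (List ℕ)) : List ℕ :=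
  (S.val.toList.argmin List.length).getD []

/-- The parent tube of `S` in the tubing `τ` of `t`: the intersection of all tubes of `τ`
strictly containing `S` (together with the vertex set of `t`). -/
noncomputable def parentTube (t : PreTree I E) (τ : Finset (Finset (List ℕ)))
    (S : Finset (List ℕ)) : Finset (List ℕ) :=
  ((τ.filter fun T => S ⊂ T).val.toList).foldr (fun a b => a ∩ b) t.supp

/-- `S` is an upset of `T` (with respect to the tree order in which the root is maximal). -/
def IsUpsetIn (S T : Finset (List ℕ)) : Prop :=
  ∀ a ∈ S, ∀ b ∈ T, b <+: a → b ∈ S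

/-- An upper tube of a binary tubing: a member of `τ` which is an upset in its parent
tube. -/
def IsUpperTube (t : PreTree I E) (τ : Finset (Finset (List ℕ)))
    (S : Finset (List ℕ)) : Prop :=
  S ∈ τ ∧ ∃ T ∈ τ, S ⊂ T ∧ (∀ U ∈ τ, S ⊂ U → T ⊆ U) ∧ IsUpsetIn S T

/-- The lower tube corresponding to an upper tube `S`: the complement of `S` in its
parent tube. -/
noncomputable def lowerPartner (t : PreTree I E) (τ : Finset (Finset (List ℕ)))
    (S : Finset (List ℕ)) : Finset (List ℕ) :=
  parentTube t τ S \ S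

open scoped Classical in
/-- The type of an upper tube `S`: the decoration of the first edge on the path from the
root of `S` to the root of the corresponding lower tube. -/
noncomputable def tubeType (t : PreTree I E) (τ : Finset (Finset (List ℕ)))
    (S : Finset (List ℕ)) : Option (Σ i : I, E i) :=
  t.edec ((tubeRoot (lowerPartner t τ S)).take ((tubeRoot S).length + 1))

open scoped Classical in
/-- The rank vector of a vertex `v` in a tubing: for each edge type `e ∈ E_{d(v)}`, the
number of upper tubes of type `e` rooted at `v`. -/
noncomputable def rankVec (t : PreTree I E) (τ : Finset (Finset (List ℕ)))
    (v : List ℕ) : E (t.vdec v) → ℕ := fun e =>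
  (τ.filter fun S => IsUpperTube t τ S ∧ tubeRoot S = v ∧
    tubeType t τ S = some ⟨t.vdec v, e⟩).card

open scoped Classical in
/-- The (untyped) rank of a vertex `v` in a tubing: the number of upper tubes rooted
at `v`. -/
noncomputable def rank (t : PreTree I E) (τ : Finset (Finset (List ℕ)))
    (v : List ℕ) : ℕ :=
  (τ.filter fun S => IsUpperTube t τ S ∧ tubeRoot S = v).card

open scoped Classical in
/-- The statistic `b(τ)`: the number of tubes of `τ` containing the root of the tree. -/
noncomputable def bstat (τ : Finset (Finset (List ℕ))) : ℕ :=
  (τ.filter fun S => ([] : List ℕ) ∈ S).card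

variable (K : Type) [Field K] [CharZero K]

/-- The Mellin monomial of a tubing `τ` with respect to a family of coefficients
`a_{i,α}`: the product over the non-root vertices `v` of `a_{d(v), rk(τ,v)}`. -/
noncomputable def mel (a : (i : I) → (E i → ℕ) → K) (t : PreTree I E)
    (τ : Finset (Finset (List ℕ))) : K :=
  ∏ v ∈ t.supp.erase [], a (t.vdec v) (rankVec t τ v)

open scoped Classical in
/-- The `k`-th β-vector of a tubing: for each type `e`, the number of upper tubes of type
`e` containing the root, excluding the `k − 1` outermost upper tubes containing the
root. -/
noncomputable def betaVec (t : PreTree I E) (τ : Finset (Finset (List ℕ)))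
    (k : ℕ) : E (t.vdec []) → ℕ := fun e =>
  (τ.filter fun S => IsUpperTube t τ S ∧ ([] : List ℕ) ∈ S ∧
    tubeType t τ S = some ⟨t.vdec [], e⟩ ∧
    k - 1 ≤ (τ.filter fun T => IsUpperTube t τ T ∧ ([] : List ℕ) ∈ T ∧ S ⊂ T).card).card

/-- The contribution of all tubings of the tree `t` in the tubing expansion:
`Σ_{τ ∈ Tub(t)} mel(τ) Σ_{k=1}^{b(τ)} a_{d(t), β^k(τ)} L^k / k!`. -/
noncomputable def tubingPoly (a : (i : I) → (E i → ℕ) → K) (t : PreTree I E) :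
    Polynomial K :=
  ∑ᶠ τ ∈ {τ : Finset (Finset (List ℕ)) | IsBinaryTubing t τ},
    mel K a t τ • ∑ k ∈ Finset.Icc 1 (bstat τ),
      a (t.vdec []) (betaVec t τ k) • Polynomial.monomial k (((Nat.factorial k : K))⁻¹)

/-- The linear-term coefficient of the tubing expansion:
`σ(t) = Σ_{τ ∈ Tub(t)} a_{d(t), β¹(τ)} mel(τ)`. -/
noncomputable def tubingLin (a : (i : I) → (E i → ℕ) → K) (t : PreTree I E) : K :=
  ∑ᶠ τ ∈ {τ : Finset (Finset (List ℕ)) | IsBinaryTubing t τ},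
    a (t.vdec []) (betaVec t τ 1) * mel K a t τ

end CK
namespace CK

open scoped TensorProduct

variable (K : Type) [Field K] [CharZero K]

/-! ### The Riordan Hopf algebra and the Faà di Bruno Hopf algebra.

`Rio` is the polynomial algebra `K[π₁, π₂, …, y₁, y₂, …]`; the variable `Sum.inl m`
represents `π_{m+1}` and the variable `Sum.inr m` represents `y_{m+1}`. -/
abbrev Rio : Type := MvPolynomial (ℕ ⊕ ℕ) K

/-- The generator `π_n` (`n ≥ 1`) of `Rio`. -/
noncomputable def rioPi (n : ℕ) : Rio K := MvPolynomial.X (Sum.inl (n - 1))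

/-- The generator `y_n` (`n ≥ 1`) of `Rio`. -/
noncomputable def rioY (n : ℕ) : Rio K := MvPolynomial.X (Sum.inr (n - 1))

/-- The series `Π(x) = x + Σ_{n≥1} π_n x^{n+1}`. -/
noncomputable def PiS : PowerSeries (Rio K) :=
  PowerSeries.mk fun n => if n = 0 then 0 else if n = 1 then 1 else rioPi K (n - 1)

/-- The series `Y(x) = 1 + Σ_{n≥1} y_n x^n`. -/
noncomputable def YS : PowerSeries (Rio K) :=
  PowerSeries.mk fun n => if n = 0 then 1 else rioY K n

/-- `π_n` for `n ≥ 0` with the convention `π₀ = 1`. -/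
noncomputable def rioPi' (n : ℕ) : Rio K := if n = 0 then 1 else rioPi K n

/-- `y_n` for `n ≥ 0` with the convention `y₀ = 1`. -/
noncomputable def rioY' (n : ℕ) : Rio K := if n = 0 then 1 else rioY K n

/-- The coproduct of the Riordan Hopf algebra, determined on the generators by
`Δ π_n = Σ_{k=0}^n ([x^{n+1}] Π(x)^{k+1}) ⊗ π_k` and
`Δ y_n = Σ_{j=0}^n ([x^n] Y(x) Π(x)^j) ⊗ y_j`. -/
noncomputable def comulRio : Rio K →ₐ[K] Rio K ⊗[K] Rio K :=
  MvPolynomial.aeval fun v =>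
    match v with
    | Sum.inl m =>
        ∑ k ∈ Finset.range (m + 2),
          (PowerSeries.coeff (m + 2) ((PiS K) ^ (k + 1))) ⊗ₜ[K] rioPi' K k
    | Sum.inr m =>
        ∑ j ∈ Finset.range (m + 2),
          (PowerSeries.coeff (m + 1) (YS K * (PiS K) ^ j)) ⊗ₜ[K] rioY' K j

/-- The counit of the Riordan Hopf algebra. -/
noncomputable def counitRio : Rio K →ₐ[K] K := MvPolynomial.aeval fun _ => 0

/-- The subalgebra `FdB ⊂ Rio` generated by the `π`'s: a copy of the Faà di Bruno Hopf
algebra. -/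
noncomputable def fdbInRio : Subalgebra K (Rio K) :=
  Algebra.adjoin K (Set.range fun m : ℕ => (MvPolynomial.X (Sum.inl m) : Rio K))

/-- The subalgebra `FdB^{(n)} ⊆ Rio` generated by `π₁, …, π_{n-1}`. -/
noncomputable def fdbN (n : ℕ) : Subalgebra K (Rio K) :=
  Algebra.adjoin K ((fun m : ℕ => (MvPolynomial.X (Sum.inl m) : Rio K)) ''
    {m | m + 2 ≤ n})

/-- The subalgebra `Rio^{(n)} ⊆ Rio` generated by `π₁, …, π_{n-1}, y₁, …, y_n`. -/
noncomputable def rioN (n : ℕ) : Subalgebra K (Rio K) :=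
  Algebra.adjoin K
    (((fun m : ℕ => (MvPolynomial.X (Sum.inl m) : Rio K)) '' {m | m + 2 ≤ n}) ∪
     ((fun m : ℕ => (MvPolynomial.X (Sum.inr m) : Rio K)) '' {m | m + 1 ≤ n}))

/-- `φ : Rio → A` is a bialgebra morphism when restricted to the subalgebra `S`
(with respect to a coproduct `Δ_A` and counit `ε_A` on `A`). -/
def IsBialgHomOn {A : Type} [CommRing A] [Algebra K A]
    (ΔA : A →ₗ[K] A ⊗[K] A) (εA : A →ₗ[K] K) (φ : Rio K →ₐ[K] A)
    (S : Subalgebra K (Rio K)) : Prop :=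
  ∀ z ∈ S, ΔA (φ z) = (TensorProduct.map φ.toLinearMap φ.toLinearMap) (comulRio K z) ∧
    εA (φ z) = counitRio K z

/-- The Faà di Bruno Hopf algebra `K[π₁, π₂, …]`; variable `m` represents `π_{m+1}`. -/
abbrev FdB : Type := MvPolynomial ℕ K

/-- The generator `π_n` (`n ≥ 1`) of `FdB`. -/
noncomputable def fdbPi (n : ℕ) : FdB K := MvPolynomial.X (n - 1)

/-- `π_n` for `n ≥ 0` with the convention `π₀ = 1`. -/
noncomputable def fdbPi' (n : ℕ) : FdB K := if n = 0 then 1 else fdbPi K n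

/-- The series `Π(x) = x + Σ_{n≥1} π_n x^{n+1}` of the Faà di Bruno Hopf algebra. -/
noncomputable def fdbPiS : PowerSeries (FdB K) :=
  PowerSeries.mk fun n => if n = 0 then 0 else if n = 1 then 1 else fdbPi K (n - 1)

/-- The coproduct of the Faà di Bruno Hopf algebra:
`Δ π_n = Σ_{k=0}^n ([x^{n+1}] Π(x)^{k+1}) ⊗ π_k`. -/
noncomputable def comulFdB : FdB K →ₐ[K] FdB K ⊗[K] FdB K :=
  MvPolynomial.aeval fun m =>
    ∑ k ∈ Finset.range (m + 2),
      (PowerSeries.coeff (m + 2) ((fdbPiS K) ^ (k + 1))) ⊗ₜ[K] fdbPi' K k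

/-- The counit of the Faà di Bruno Hopf algebra. -/
noncomputable def counitFdB : FdB K →ₐ[K] K := MvPolynomial.aeval fun _ => 0

end CK
namespace CK

open scoped TensorProduct

section TPow

variable (K : Type) [Field K] [CharZero K]
variable (E : Type) [Fintype E] [DecidableEq E]
variable (A : Type) [CommRing A] [Algebra K A]

/-- The inclusion of the `e`-th factor `A → A^{⊗E}`. -/
noncomputable def tpowInclude (e : E) : A →ₗ[K] (⨂[K] _ : E, A) where
  toFun a := PiTensorProduct.tprod K (Function.update (fun _ => (1 : A)) e a)
  map_add' x y := by
    simpa using MultilinearMap.map_update_add (PiTensorProduct.tprod K)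
      (fun _ => (1 : A)) e x y
  map_smul' c x := by
    simpa using MultilinearMap.map_update_smul (PiTensorProduct.tprod K)
      (fun _ => (1 : A)) e c x

/-- The canonical left coaction of a bialgebra `A` on its tensor power `A^{⊗E}`, obtained
by applying the coproduct to every factor and multiplying the left tensor legs. -/
noncomputable def tpowCoaction (ΔA : A →ₗ[K] A ⊗[K] A) :
    (⨂[K] _ : E, A) →ₗ[K] A ⊗[K] (⨂[K] _ : E, A) :=
  (PiTensorProduct.lift
    ((MultilinearMap.mkPiAlgebra K E (A ⊗[K] (⨂[K] _ : E, A))).compLinearMap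
      fun e => TensorProduct.map LinearMap.id (tpowInclude K E A e))) ∘ₗ
  (PiTensorProduct.map fun _ => ΔA)

/-- A multilinear map `Λ : A^{⊗E} → A` is a 1-cocycle if (the induced map on the tensor
power satisfies) `Δ ∘ Λ = Λ ⊗ 1 + (id ⊗ Λ) ∘ δ`. -/
def IsCocycleTPow (ΔA : A →ₗ[K] A ⊗[K] A)
    (Λ : MultilinearMap K (fun _ : E => A) A) : Prop :=
  ∀ z : ⨂[K] _ : E, A,
    ΔA (PiTensorProduct.lift Λ z) =
      (PiTensorProduct.lift Λ z) ⊗ₜ[K] 1 +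
      (TensorProduct.map LinearMap.id (PiTensorProduct.lift Λ)) (tpowCoaction K E A ΔA z)

end TPow

end CK

/-!
For a natural number `N` the binomial power `Y(x)^N` is an honest power, and the coproduct,
applied coefficientwise, is a ring homomorphism of power series. The defining formulas for
`Δ π_n` and `Δ y_n` say that `Δ Π = (1 ⊗ Π) ∘ (Π ⊗ 1)` and `Δ Y = (Y ⊗ 1) · ((1 ⊗ Y) ∘ (Π ⊗ 1))`,
hence `Δ(Y^N Π^k) = (Y^N ⊗ 1) · ((1 ⊗ Y^N Π^k) ∘ (Π ⊗ 1))`, whose `n`-th coefficient is the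
claimed sum. For fixed `n`, both sides of the identity are polynomials in `s` with coefficients in
`Rio ⊗ Rio`; they agree at every natural number, so in characteristic zero they agree everywhere.
-/

namespace CK

open Finset PowerSeries
open scoped TensorProduct

section Subst

variable {R : Type} [CommRing R]

theorem constantCoeff_map_eq_zero {S : Type} [CommRing S] (f : R →+* S) {P : R⟦X⟧}
    (hP : constantCoeff P = 0) : constantCoeff (PowerSeries.map f P) = 0 := by
  rw [← coeff_zero_eq_constantCoeff_apply, coeff_map, coeff_zero_eq_constantCoeff_apply, hP,
    map_zero]

theorem coeff_pow_eq_zero_of_lt {b : R⟦X⟧} (hb : constantCoeff b = 0) {n j : ℕ} (h : n < j) :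
    coeff n (b ^ j) = 0 :=
  coeff_of_lt_order n <| lt_of_lt_of_le (by exact_mod_cast h)
    (le_order_pow_of_constantCoeff_eq_zero j hb)

theorem coeff_subst_eq_sum_range {b : R⟦X⟧} (hb : constantCoeff b = 0) (f : R⟦X⟧)
    {n M : ℕ} (hM : n < M) :
    coeff n (f.subst b) = ∑ j ∈ range M, coeff j f * coeff n (b ^ j) := by
  rw [coeff_subst' (HasSubst.of_constantCoeff_zero' hb)]
  refine finsum_eq_sum_of_support_subset _ fun j hj => ?_
  rw [coe_range, Set.mem_Iio]
  by_contra hjM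
  exact hj (by simp only [smul_eq_mul, coeff_pow_eq_zero_of_lt hb (show n < j by omega), mul_zero])

end Subst

section TensorSubst

open Algebra.TensorProduct

variable {K R S : Type} [CommRing K] [CommRing R] [CommRing S] [Algebra K R] [Algebra K S]

theorem coeff_map_includeLeft_mul_subst {P : R⟦X⟧} (hP : constantCoeff P = 0) (W : R⟦X⟧)
    (B : S⟦X⟧) (n : ℕ) :
    coeff n (PowerSeries.map includeLeftRingHom W *
        (PowerSeries.map (AlgHom.toRingHom (includeRight : S →ₐ[K] R ⊗[K] S)) B).subst
          (PowerSeries.map includeLeftRingHom P)) =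
      ∑ j ∈ range (n + 1), coeff n (W * P ^ j) ⊗ₜ[K] coeff j B := by
  rw [coeff_mul]
  calc _ = ∑ pq ∈ antidiagonal n, ∑ j ∈ range (n + 1),
        (coeff pq.1 W * coeff pq.2 (P ^ j)) ⊗ₜ[K] coeff j B := by
        refine sum_congr rfl fun pq hpq => ?_
        rw [coeff_subst_eq_sum_range (constantCoeff_map_eq_zero _ hP) _
          (Nat.antidiagonal.snd_lt hpq), mul_sum]
        refine sum_congr rfl fun j _ => ?_
        simp only [← map_pow, coeff_map, includeLeftRingHom_apply, AlgHom.toRingHom_eq_coe,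
          RingHom.coe_coe, includeRight_apply, tmul_mul_tmul, mul_one, one_mul]
    _ = _ := by
        rw [sum_comm]
        simp only [← TensorProduct.sum_tmul, ← coeff_mul]

end TensorSubst

section PolyFun

variable (K : Type) [Field K]

noncomputable def polyFun (A : Type) [CommRing A] [Algebra K A] : Subring (K → A) :=
  (RingHom.pi fun u : K => Polynomial.evalRingHom (algebraMap K A u)).range

variable {K} {A B : Type} [CommRing A] [Algebra K A] [CommRing B] [Algebra K B]

theorem mem_polyFun {g : K → A} :
    g ∈ polyFun K A ↔ ∃ q : Polynomial A, ∀ u, q.eval (algebraMap K A u) = g u := by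
  simp [polyFun, funext_iff]

theorem const_mem_polyFun (a : A) : (fun _ => a) ∈ polyFun K A :=
  mem_polyFun.2 ⟨Polynomial.C a, fun _ => Polynomial.eval_C⟩

theorem eval_smul_mem_polyFun (p : Polynomial K) (a : A) :
    (fun u => p.eval u • a) ∈ polyFun K A :=
  mem_polyFun.2 ⟨p.map (algebraMap K A) * Polynomial.C a, fun u => by
    simp [Polynomial.eval_map, Polynomial.eval₂_at_apply, Algebra.smul_def]⟩

theorem comp_mem_polyFun (φ : A →ₐ[K] B) {g : K → A} (hg : g ∈ polyFun K A) :
    (fun u => φ (g u)) ∈ polyFun K B := by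
  obtain ⟨q, hq⟩ := mem_polyFun.1 hg
  refine mem_polyFun.2 ⟨q.map φ, fun u => ?_⟩
  rw [← hq, Polynomial.eval_map, ← φ.commutes, ← AlgHom.coe_toRingHom, Polynomial.eval₂_at_apply]

theorem tmul_mem_polyFun {g : K → A} {h : K → B} (hg : g ∈ polyFun K A)
    (hh : h ∈ polyFun K B) : (fun u => g u ⊗ₜ[K] h u) ∈ polyFun K (A ⊗[K] B) := by
  have := mul_mem (comp_mem_polyFun (Algebra.TensorProduct.includeLeft (S := K)) hg)
    (comp_mem_polyFun (Algebra.TensorProduct.includeRight (A := A)) hh)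
  simpa [Pi.mul_def, Algebra.TensorProduct.tmul_mul_tmul] using this

/- Linear functionals separate the points of `A`, and composing one of them with a polynomial
function gives a polynomial function `K → K`, which vanishes on the infinite set `ℕ ⊆ K`. -/
theorem eq_of_mem_polyFun_of_eq_natCast [CharZero K] {g h : K → A} (hg : g ∈ polyFun K A)
    (hh : h ∈ polyFun K A) (hgh : ∀ N : ℕ, g N = h N) : g = h := by
  obtain ⟨q, hq⟩ := mem_polyFun.1 (sub_mem hg hh)
  rw [← sub_eq_zero]
  funext u
  refine (Module.forall_dual_apply_eq_zero_iff K _).1 fun f => ?_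
  set p : Polynomial K := q.sum fun i a => Polynomial.C (f a) * Polynomial.X ^ i
  have hp : ∀ u, p.eval u = f ((g - h) u) := by
    intro u
    rw [← hq, Polynomial.eval_eq_sum (p := q), Polynomial.sum_def, map_sum]
    simp only [p, Polynomial.sum_def, Polynomial.eval_finsetSum]
    refine sum_congr rfl fun i _ => ?_
    rw [Polynomial.eval_mul, Polynomial.eval_C, Polynomial.eval_pow, Polynomial.eval_X, ← map_pow,
      ← Algebra.commutes, ← Algebra.smul_def, map_smul, smul_eq_mul, mul_comm]
  have hp0 : p = 0 := p.eq_zero_of_infinite_isRoot <|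
    Set.infinite_of_injective_forall_mem Nat.cast_injective fun N : ℕ => by
      simp [Polynomial.IsRoot, hp, hgh N]
  simpa [hp0] using (hp u).symm

end PolyFun

section BinomialSeries

variable {K : Type} [Field K] {H : Type} [CommRing H] [Algebra K H]

theorem binomC_eq_eval (u : K) (m : ℕ) :
    binomC K u m = (descPochhammer K m * Polynomial.C (m.factorial : K)⁻¹).eval u := by
  rw [binomC, ffall, Polynomial.eval_mul, Polynomial.eval_C, descPochhammer_eval_eq_prod_range,
    div_eq_mul_inv]

theorem binomC_natCast [CharZero K] (N m : ℕ) : binomC K (N : K) m = N.choose m := by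
  rw [binomC, ffall, ← descPochhammer_eval_eq_prod_range, descPochhammer_eval_eq_descFactorial,
    Nat.descFactorial_eq_factorial_mul_choose, Nat.cast_mul,
    mul_div_cancel_left₀ _ (by exact_mod_cast m.factorial_ne_zero)]

theorem binomPow_natCast [CharZero K] (N : ℕ) {F : H⟦X⟧} (hF : constantCoeff F = 1) :
    binomPow (N : K) F = F ^ N := by
  have hF1 : constantCoeff (F - 1) = 0 := by rw [map_sub, hF, map_one, sub_self]
  ext n
  calc coeff n (binomPow (N : K) F)
      = ∑ m ∈ range (n + 1), (N.choose m : K) • coeff n ((F - 1) ^ m) := by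
        simp only [binomPow, coeff_mk, binomC_natCast]
    _ = ∑ m ∈ range (n + N + 1), (N.choose m : K) • coeff n ((F - 1) ^ m) :=
        sum_subset (range_subset_range.2 (by omega)) fun m _ hm => by
          rw [coeff_pow_eq_zero_of_lt hF1 (by simpa using hm), smul_zero]
    _ = ∑ m ∈ range (N + 1), (N.choose m : K) • coeff n ((F - 1) ^ m) :=
        (sum_subset (range_subset_range.2 (by omega)) fun m _ hm => by
          rw [Nat.choose_eq_zero_of_lt (by simpa using hm), Nat.cast_zero, zero_smul]).symm
    _ = coeff n (F ^ N) := by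
        rw [show F ^ N = (F - 1 + 1) ^ N by rw [sub_add_cancel], add_pow, map_sum]
        refine sum_congr rfl fun m _ => ?_
        rw [one_pow, mul_one, ← map_natCast (C (R := H)), coeff_mul_C, Nat.cast_smul_eq_nsmul,
          nsmul_eq_mul, mul_comm]

theorem coeff_binomPow_mul_mem_polyFun (F G : H⟦X⟧) (n : ℕ) :
    (fun u : K => coeff n (binomPow u F * G)) ∈ polyFun K H := by
  have hcoeff : ∀ i, (fun u : K => coeff i (binomPow u F)) ∈ polyFun K H := fun i => by
    simp only [binomPow, coeff_mk, binomC_eq_eval, ← sum_fn]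
    exact sum_mem fun m _ => eval_smul_mem_polyFun _ _
  simp only [coeff_mul, ← sum_fn]
  exact sum_mem fun pq _ => mul_mem (hcoeff pq.1) (const_mem_polyFun _)

end BinomialSeries

section Riordan

open Algebra.TensorProduct

variable (K : Type) [Field K]

theorem constantCoeff_PiS : constantCoeff (PiS K) = 0 := by
  simp [PiS]

theorem constantCoeff_YS : constantCoeff (YS K) = 1 := by
  simp [YS]

theorem coeff_succ_PiS (i : ℕ) : coeff (i + 1) (PiS K) = rioPi' K i := by
  rcases i with _ | i <;> simp [PiS, rioPi', rioPi]

theorem coeff_YS (j : ℕ) : coeff j (YS K) = rioY' K j := by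
  rcases j with _ | j <;> simp [YS, rioY', rioY]

theorem comulRio_coeff_PiS (n : ℕ) :
    comulRio K (coeff n (PiS K)) =
      ∑ j ∈ range (n + 1), coeff n (PiS K ^ j) ⊗ₜ[K] coeff j (PiS K) := by
  rcases n with _ | _ | m
  · simp [PiS]
  · simp [PiS, sum_range_succ, Algebra.TensorProduct.one_def]
  · have hX : coeff (m + 2) (PiS K) = MvPolynomial.X (Sum.inl m) := by simp [PiS, rioPi]
    rw [sum_range_succ', pow_zero, coeff_one, if_neg (by omega), TensorProduct.zero_tmul, add_zero]
    simp only [hX, comulRio, MvPolynomial.aeval_X, coeff_succ_PiS]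

theorem comulRio_coeff_YS (n : ℕ) :
    comulRio K (coeff n (YS K)) =
      ∑ j ∈ range (n + 1), coeff n (YS K * PiS K ^ j) ⊗ₜ[K] coeff j (YS K) := by
  rcases n with _ | m
  · simp [YS, Algebra.TensorProduct.one_def]
  · have hX : coeff (m + 1) (YS K) = MvPolynomial.X (Sum.inr m) := by simp [YS, rioY]
    simp only [hX, comulRio, MvPolynomial.aeval_X, coeff_YS]

local notation "ι₁" => PowerSeries.map (includeLeftRingHom : Rio K →+* Rio K ⊗[K] Rio K)
local notation "ι₂" =>
  PowerSeries.map (AlgHom.toRingHom (includeRight : Rio K →ₐ[K] Rio K ⊗[K] Rio K))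

theorem map_comulRio_PiS :
    PowerSeries.map (comulRio K).toRingHom (PiS K) = (ι₂ (PiS K)).subst (ι₁ (PiS K)) := by
  ext n
  simpa [comulRio_coeff_PiS] using
    (coeff_map_includeLeft_mul_subst (constantCoeff_PiS K) 1 (PiS K) n).symm

theorem map_comulRio_YS :
    PowerSeries.map (comulRio K).toRingHom (YS K) =
      ι₁ (YS K) * (ι₂ (YS K)).subst (ι₁ (PiS K)) := by
  ext n
  rw [coeff_map_includeLeft_mul_subst (constantCoeff_PiS K), coeff_map]
  exact comulRio_coeff_YS K n

theorem comulRio_coeff_YS_pow_mul_PiS_pow (N k n : ℕ) :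
    comulRio K (coeff n (YS K ^ N * PiS K ^ k)) =
      ∑ j ∈ range (n + 1),
        coeff n (YS K ^ N * PiS K ^ j) ⊗ₜ[K] coeff j (YS K ^ N * PiS K ^ k) := by
  have hsubst : HasSubst (ι₁ (PiS K)) :=
    HasSubst.of_constantCoeff_zero' (constantCoeff_map_eq_zero _ (constantCoeff_PiS K))
  have hmap : PowerSeries.map (comulRio K).toRingHom (YS K ^ N * PiS K ^ k) =
      ι₁ (YS K ^ N) * (ι₂ (YS K ^ N * PiS K ^ k)).subst (ι₁ (PiS K)) := by
    simp only [map_mul, map_pow, map_comulRio_YS, map_comulRio_PiS, subst_mul hsubst,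
      subst_pow hsubst]
    ring
  rw [← coeff_map_includeLeft_mul_subst (constantCoeff_PiS K), ← hmap, coeff_map]
  rfl

end Riordan

/-- In the Riordan Hopf algebra, for any `s ∈ K` and `k ∈ ℤ_{≥0}`,
applying the coproduct coefficientwise:
`Δ(Y(x)^s Π(x)^k) = Σ_{j≥0} Y(x)^s Π(x)^j ⊗ [x^j](Y(x)^s Π(x)^k)`. -/
theorem statement_15 (K : Type) [Field K] [CharZero K] (s : K) (k : ℕ) :
    lapp (comulRio K).toLinearMap (binomPow s (YS K) * (PiS K) ^ k) =
      PowerSeries.mk fun n =>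
        ∑ j ∈ Finset.range (n + 1),
          (PowerSeries.coeff n (binomPow s (YS K) * (PiS K) ^ j)) ⊗ₜ[K]
            (PowerSeries.coeff j (binomPow s (YS K) * (PiS K) ^ k)) := by
  ext n
  have hpoly : (fun u : K => comulRio K (coeff n (binomPow u (YS K) * PiS K ^ k))) =
      fun u => ∑ j ∈ range (n + 1),
        coeff n (binomPow u (YS K) * PiS K ^ j) ⊗ₜ[K] coeff j (binomPow u (YS K) * PiS K ^ k) := by
    refine eq_of_mem_polyFun_of_eq_natCast
      (comp_mem_polyFun _ (coeff_binomPow_mul_mem_polyFun _ _ n)) ?_ fun N => ?_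
    · simp only [← sum_fn]
      exact sum_mem fun j _ => tmul_mem_polyFun (coeff_binomPow_mul_mem_polyFun _ _ n)
        (coeff_binomPow_mul_mem_polyFun _ _ j)
    · simp only [binomPow_natCast N (constantCoeff_YS K)]
      exact comulRio_coeff_YS_pow_mul_PiS_pow K N k n
  simpa [lapp] using congrFun hpoly s

end CK
end

section
/- Let t be a finite rooted tree with more than one vertex. There is a bijection between binary tubings τ of t and triples (t', τ', τ''), where t' is a proper subtree of t (a principal downset different from t), τ' ∈ Tub(t'), and τ'' ∈ Tub(t∖t'). Moreover, under this bijection: rk(τ,v) = rk(τ',v) for v ∈ t'; rk(τ, rt t) = rk(τ'', rt t) + 1; rk(τ,v) = rk(τ'',v) for all other v ∈ t∖t'; and b(τ) = b(τ'') + 1. -/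
open scoped TensorProduct

namespace CK

variable {I : Type} {E : I → Type}

open scoped Classical in
/-- The number of children of `v` joined to `v` by an edge decorated `e` and whose own
decoration lies in the block of the partition indexed by `j` (`cl` is the partition
map). -/
noncomputable def odCount {J : Type} (cl : I → J) (t : PreTree I E)
    (v : List ℕ) (e : E (t.vdec v)) (j : J) : ℕ :=
  ((childrenAt t v).filter fun c =>
    t.edec c = some ⟨t.vdec v, e⟩ ∧ cl (t.vdec c) = j).card

variable (K : Type) [Field K] [CharZero K]

/-- Coefficientwise application of the grafting operator `B̃₊^{(i)}` (as a multilinear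
map on the `E i`-th tensor power) to a tuple of power series. -/
noncomputable def BappS (i : I) [Fintype (E i)]
    (S : E i → PowerSeries (HCK K I E)) : PowerSeries (HCK K I E) :=
  PowerSeries.mk fun m =>
    ∑ᶠ d : E i → ℕ, if (∑ e : E i, d e) = m then
      Bapp K i (fun e => PowerSeries.coeff (d e) (S e)) else 0

end CK
/-!
Let `B` be a maximal proper tube of the binary tubing `τ` containing the root, and `r` a vertex
outside `B` whose parent lies in `B`. Laminarity with `B` forces every other tube of `τ` to be
nested in or disjoint from the subtree `dset t r`; hence `dset t r` and `B ∪ dset t r` can be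
added to `τ`, so they lie in `τ`, and maximality of `B` gives `B = t ∖ dset t r`. Thus every
tube of `τ` other than `t` lies in `t' = dset t r` or in `t ∖ t'`, and these two families are
binary tubings of `t'` and `t ∖ t'`; conversely two such tubings together with `t` form a binary
tubing of `t`, and `t'` is recovered from it as the unique split. Upper tubes correspond under
this decomposition, except for `B`, which is upper in `τ` (rooted at the root of `t`) but is the
top tube of the tubing of `t ∖ t'`; likewise `t` is the one extra tube containing the root.
-/

namespace CK

open scoped Classical

variable {I : Type} {E : I → Type}

section Nested

variable {α : Type*}

def NestedOrDisjoint (S T : Finset α) : Prop := S ⊆ T ∨ T ⊆ S ∨ Disjoint S T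

theorem NestedOrDisjoint.symm {S T : Finset α} (h : NestedOrDisjoint S T) :
    NestedOrDisjoint T S := by
  rcases h with h | h | h
  exacts [Or.inr (Or.inl h), Or.inl h, Or.inr (Or.inr h.symm)]

theorem nestedOrDisjoint_map_iff {β : Type*} (f : α ↪ β) {S T : Finset α} :
    NestedOrDisjoint (S.map f) (T.map f) ↔ NestedOrDisjoint S T := by
  simp only [NestedOrDisjoint, Finset.map_subset_map, Finset.disjoint_map]

theorem NestedOrDisjoint.subset_or_subset_or_eq_union [DecidableEq α] {S A B : Finset α}
    (hS : S ⊆ A ∪ B) (hA : NestedOrDisjoint S A) (hB : NestedOrDisjoint S B) :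
    S ⊆ A ∨ S ⊆ B ∨ S = A ∪ B := by
  rcases hA with hSA | hAS | hSA
  · exact Or.inl hSA
  · rcases hB with hSB | hBS | hSB
    · exact Or.inr (Or.inl hSB)
    · exact Or.inr (Or.inr (hS.antisymm (Finset.union_subset hAS hBS)))
    · exact Or.inl fun x hx => (Finset.mem_union.mp (hS hx)).resolve_right
        (Finset.disjoint_left.mp hSB hx)
  · exact Or.inr (Or.inl fun x hx => (Finset.mem_union.mp (hS hx)).resolve_left
      (Finset.disjoint_left.mp hSA hx))

end Nested

section Tubes

variable {t : PreTree I E} {τ : Finset (Finset (List ℕ))}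

def HasRoot (S : Finset (List ℕ)) (ρ : List ℕ) : Prop := ρ ∈ S ∧ ∀ v ∈ S, ρ <+: v

theorem HasRoot.tubeRoot_eq {S : Finset (List ℕ)} {ρ : List ℕ} (h : HasRoot S ρ) :
    tubeRoot S = ρ := by
  have hne : S.val.toList ≠ [] := by
    simpa using Finset.nonempty_iff_ne_empty.mp ⟨ρ, h.1⟩
  obtain ⟨m, hm⟩ : ∃ m, S.val.toList.argmin List.length = some m :=
    Option.ne_none_iff_exists'.mp fun hn => hne (List.argmin_eq_none.mp hn)
  have hmS : m ∈ S := by simpa using List.argmin_mem hm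
  have hρm : ρ = m := (h.2 m hmS).eq_of_length_le
    (List.le_of_mem_argmin (by simpa using h.1) hm)
  simp [tubeRoot, hm, hρm]

theorem IsTube.hasRoot {S : Finset (List ℕ)} (h : IsTube t S) : HasRoot S (tubeRoot S) := by
  obtain ⟨-, -, ρ, hρ, hpre, -⟩ := h
  rw [HasRoot.tubeRoot_eq ⟨hρ, hpre⟩]
  exact ⟨hρ, hpre⟩

theorem IsTube.subset_supp {S : Finset (List ℕ)} (h : IsTube t S) : S ⊆ t.supp := h.2.1

theorem IsTube.mem_of_prefix_of_nil_mem {S : Finset (List ℕ)} (h : IsTube t S)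
    (h0 : ([] : List ℕ) ∈ S) {v w : List ℕ} (hv : v ∈ S) (hwv : w <+: v) : w ∈ S := by
  obtain ⟨-, -, ρ, hρ, hpre, hconv⟩ := h
  obtain rfl : ρ = [] := List.prefix_nil.mp (hpre [] h0)
  exact hconv v hv w List.nil_prefix hwv

theorem isTube_supp (ht : t.WF) : IsTube t t.supp :=
  ⟨⟨[], ht.1⟩, subset_rfl, [], ht.1, fun _ _ => List.nil_prefix,
    fun v hv w _ hwv => ht.2.1 v hv w hwv⟩

theorem isTube_singleton {v : List ℕ} (hv : v ∈ t.supp) : IsTube t {v} := by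
  refine ⟨Finset.singleton_nonempty v, Finset.singleton_subset_iff.mpr hv, v,
    Finset.mem_singleton_self v, fun u hu => by rw [Finset.mem_singleton.mp hu], ?_⟩
  intro u hu w hvw hwu
  rw [Finset.mem_singleton] at hu ⊢
  subst hu
  exact (hvw.eq_of_length_le hwu.length_le).symm

theorem IsBinaryTubing.isTube (hτ : IsBinaryTubing t τ) {S : Finset (List ℕ)} (hS : S ∈ τ) :
    IsTube t S := hτ.1 S hS

theorem IsBinaryTubing.nestedOrDisjoint (hτ : IsBinaryTubing t τ) {S T : Finset (List ℕ)}
    (hS : S ∈ τ) (hT : T ∈ τ) : NestedOrDisjoint S T := hτ.2.1 S hS T hT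

theorem isBinaryTubing_iff : IsBinaryTubing t τ ↔ (∀ S ∈ τ, IsTube t S) ∧ Laminar τ ∧
    ∀ S, IsTube t S → (∀ T ∈ τ, NestedOrDisjoint S T) → S ∈ τ := by
  constructor
  · rintro ⟨htube, hlam, hmax⟩
    refine ⟨htube, hlam, fun S hS hcompat => ?_⟩
    have hins := hmax (insert S τ) (Finset.subset_insert S τ)
      (Finset.forall_mem_insert _ _ _ |>.mpr ⟨hS, htube⟩) ?_
    · exact hins ▸ Finset.mem_insert_self S τ
    intro A hA B hB
    rw [Finset.mem_insert] at hA hB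
    rcases hA with rfl | hA <;> rcases hB with rfl | hB
    · exact Or.inl subset_rfl
    · exact hcompat B hB
    · exact (hcompat A hA).symm
    · exact hlam A hA B hB
  · rintro ⟨htube, hlam, hclosed⟩
    refine ⟨htube, hlam, fun τ' hsub htube' hlam' => (Finset.Subset.antisymm ?_ hsub)⟩
    exact fun S hS => hclosed S (htube' S hS) fun T hT => hlam' S hS T (hsub hT)

theorem IsBinaryTubing.mem_of_forall (hτ : IsBinaryTubing t τ) {S : Finset (List ℕ)}
    (hS : IsTube t S) (h : ∀ T ∈ τ, NestedOrDisjoint S T) : S ∈ τ :=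
  (isBinaryTubing_iff.mp hτ).2.2 S hS h

theorem IsBinaryTubing.supp_mem (ht : t.WF) (hτ : IsBinaryTubing t τ) : t.supp ∈ τ :=
  hτ.mem_of_forall (isTube_supp ht) fun _ hT => Or.inr (Or.inl (hτ.isTube hT).subset_supp)

theorem IsBinaryTubing.singleton_mem (hτ : IsBinaryTubing t τ) {v : List ℕ}
    (hv : v ∈ t.supp) : {v} ∈ τ := by
  refine hτ.mem_of_forall (isTube_singleton hv) fun T _ => ?_
  by_cases h : v ∈ T
  · exact Or.inl (Finset.singleton_subset_iff.mpr h)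
  · exact Or.inr (Or.inr (Finset.disjoint_singleton_left.mpr h))

end Tubes

section Split

variable {t : PreTree I E} {τ : Finset (Finset (List ℕ))} {r : List ℕ}

def dset (t : PreTree I E) (r : List ℕ) : Finset (List ℕ) := t.supp.filter (r <+: ·)

theorem mem_dset {v : List ℕ} : v ∈ dset t r ↔ v ∈ t.supp ∧ r <+: v := Finset.mem_filter

theorem dset_subset_supp : dset t r ⊆ t.supp := Finset.filter_subset _ _

theorem mem_dset_self (hr : r ∈ t.supp) : r ∈ dset t r :=
  mem_dset.mpr ⟨hr, List.prefix_refl r⟩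

theorem nil_notMem_dset (hr : r ≠ []) : ([] : List ℕ) ∉ dset t r :=
  fun h => hr (List.prefix_nil.mp (mem_dset.mp h).2)

theorem nil_mem_sdiff_dset (ht : t.WF) (hr : r ≠ []) : ([] : List ℕ) ∈ t.supp \ dset t r :=
  Finset.mem_sdiff.mpr ⟨ht.1, nil_notMem_dset hr⟩

theorem isTube_dset (ht : t.WF) (hr : r ∈ t.supp) : IsTube t (dset t r) :=
  ⟨⟨r, mem_dset_self hr⟩, dset_subset_supp, r, mem_dset_self hr,
    fun _ hv => (mem_dset.mp hv).2,
    fun v hv w hrw hwv => mem_dset.mpr ⟨ht.2.1 v (mem_dset.mp hv).1 w hwv, hrw⟩⟩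

theorem prefix_dropLast_of_ne {w l : List ℕ} (h : w <+: l) (hne : w ≠ l) :
    w <+: l.dropLast := by
  obtain ⟨c, rfl⟩ := h
  have hc : c ≠ [] := fun hc => hne (by simp [hc])
  rw [List.dropLast_append_of_ne_nil hc]
  exact List.prefix_append _ _

theorem exists_notMem_dropLast_mem (ht : t.WF) {B : Finset (List ℕ)}
    (h0B : ([] : List ℕ) ∈ B) (hB : B ⊂ t.supp) :
    ∃ r ∈ t.supp, r ∉ B ∧ r.dropLast ∈ B := by
  obtain ⟨r, hr, hmin⟩ := (t.supp \ B).exists_min_image List.length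
    (Finset.sdiff_nonempty.mpr hB.2)
  rw [Finset.mem_sdiff] at hr
  refine ⟨r, hr.1, hr.2, by_contra fun hp => ?_⟩
  have hlen := hmin _ (Finset.mem_sdiff.mpr ⟨ht.2.1 r hr.1 _ (List.dropLast_prefix r), hp⟩)
  have hr0 : 0 < r.length := List.length_pos_iff.mpr fun h => hr.2 (h ▸ h0B)
  rw [List.length_dropLast] at hlen
  omega

section Boundary

variable {B : Finset (List ℕ)}

theorem disjoint_dset_of_notMem (hB : IsTube t B) (h0B : ([] : List ℕ) ∈ B) (hrB : r ∉ B) :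
    Disjoint B (dset t r) :=
  Finset.disjoint_left.mpr fun _ hwB hwD =>
    hrB (hB.mem_of_prefix_of_nil_mem h0B hwB (mem_dset.mp hwD).2)

theorem isTube_union_dset (ht : t.WF) (hB : IsTube t B)
    (h0B : ([] : List ℕ) ∈ B) (hpB : r.dropLast ∈ B) : IsTube t (B ∪ dset t r) := by
  refine ⟨⟨[], Finset.mem_union_left _ h0B⟩,
    Finset.union_subset hB.subset_supp dset_subset_supp, [], Finset.mem_union_left _ h0B,
    fun _ _ => List.nil_prefix, fun v hv w _ hwv => ?_⟩
  rcases Finset.mem_union.mp hv with hv | hv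
  · exact Finset.mem_union_left _ (hB.mem_of_prefix_of_nil_mem h0B hv hwv)
  obtain ⟨hvs, hrv⟩ := mem_dset.mp hv
  by_cases hrw : r <+: w
  · exact Finset.mem_union_right _ (mem_dset.mpr ⟨ht.2.1 v hvs w hwv, hrw⟩)
  have hwr := (List.prefix_or_prefix_of_prefix hrv hwv).resolve_left hrw
  exact Finset.mem_union_left _ (hB.mem_of_prefix_of_nil_mem h0B hpB
    (prefix_dropLast_of_ne hwr fun h => hrw (h ▸ List.prefix_refl w)))

/-- A tube avoiding the root that meets `dset t r` but is not inside it would contain both `r`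
and its parent, hence meet `B` without being nested with it. -/
theorem IsBinaryTubing.subset_dset_or_disjoint (hτ : IsBinaryTubing t τ) (hBτ : B ∈ τ)
    (h0B : ([] : List ℕ) ∈ B) (hrB : r ∉ B) (hpB : r.dropLast ∈ B) {T : Finset (List ℕ)}
    (hT : T ∈ τ) (h0T : ([] : List ℕ) ∉ T) :
    T ⊆ dset t r ∨ Disjoint T (dset t r) := by
  by_cases hdisj : Disjoint T (dset t r)
  · exact Or.inr hdisj
  obtain ⟨w, hwT, hwD⟩ := Finset.not_disjoint_iff.mp hdisj
  obtain ⟨-, hTs, ρ, hρT, hρ, hconv⟩ := hτ.isTube hT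
  have hrw := (mem_dset.mp hwD).2
  suffices hrρ : r <+: ρ from
    Or.inl fun x hx => mem_dset.mpr ⟨hTs hx, hrρ.trans (hρ x hx)⟩
  by_contra hrρ
  have hρr := (List.prefix_or_prefix_of_prefix hrw (hρ w hwT)).resolve_left hrρ
  have hpT : r.dropLast ∈ T := hconv w hwT _
    (prefix_dropLast_of_ne hρr fun h => hrρ (h ▸ List.prefix_refl ρ))
    ((List.dropLast_prefix r).trans hrw)
  rcases hτ.nestedOrDisjoint hT hBτ with hTB | hBT | hTB
  · exact Finset.disjoint_left.mp (disjoint_dset_of_notMem (hτ.isTube hBτ) h0B hrB) (hTB hwT) hwD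
  · exact h0T (hBT h0B)
  · exact Finset.disjoint_left.mp hTB hpT hpB

end Boundary

theorem IsBinaryTubing.exists_maximal_nil_mem (hτ : IsBinaryTubing t τ) (ht : t.WF)
    (hbig : 1 < t.supp.card) :
    ∃ B ∈ τ, ([] : List ℕ) ∈ B ∧ B ≠ t.supp ∧
      ∀ T ∈ τ, ([] : List ℕ) ∈ T → T ⊆ B ∨ T = t.supp := by
  have hsing : ({[]} : Finset (List ℕ)) ≠ t.supp := fun h => by simp [← h] at hbig
  obtain ⟨B, hBmem, hBmax⟩ := Finset.exists_maximal
    (s := τ.filter fun T => ([] : List ℕ) ∈ T ∧ T ≠ t.supp)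
    ⟨{[]}, Finset.mem_filter.mpr
      ⟨hτ.singleton_mem ht.1, Finset.mem_singleton_self _, hsing⟩⟩
  obtain ⟨hBτ, h0B, hBne⟩ := Finset.mem_filter.mp hBmem
  refine ⟨B, hBτ, h0B, hBne, fun T hT h0T => ?_⟩
  rcases hτ.nestedOrDisjoint hT hBτ with hTB | hBT | hTB
  · exact Or.inl hTB
  · by_cases hTs : T = t.supp
    · exact Or.inr hTs
    · exact Or.inl (hBmax (Finset.mem_filter.mpr ⟨hT, h0T, hTs⟩) hBT)
  · exact absurd h0B (Finset.disjoint_left.mp hTB h0T)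

structure IsSplit (t : PreTree I E) (τ : Finset (Finset (List ℕ))) (r : List ℕ) : Prop where
  mem : r ∈ t.supp
  ne_nil : r ≠ []
  dset_mem : dset t r ∈ τ
  sdiff_dset_mem : t.supp \ dset t r ∈ τ

theorem IsBinaryTubing.exists_isSplit (hτ : IsBinaryTubing t τ) (ht : t.WF)
    (hbig : 1 < t.supp.card) : ∃ r, IsSplit t τ r := by
  obtain ⟨B, hBτ, h0B, hBne, hBmax⟩ := hτ.exists_maximal_nil_mem ht hbig
  have hB := hτ.isTube hBτ
  obtain ⟨r, hr, hrB, hpB⟩ :=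
    exists_notMem_dropLast_mem ht h0B (hB.subset_supp.ssubset_of_ne hBne)
  have hdisj := disjoint_dset_of_notMem hB h0B hrB
  have hsplit : ∀ {T}, T ∈ τ → ([] : List ℕ) ∉ T → T ⊆ dset t r ∨ Disjoint T (dset t r) :=
    hτ.subset_dset_or_disjoint hBτ h0B hrB hpB
  have hD : dset t r ∈ τ := by
    refine hτ.mem_of_forall (isTube_dset ht hr) fun T hT => ?_
    by_cases h0T : ([] : List ℕ) ∈ T
    · rcases hBmax T hT h0T with hTB | rfl
      · exact Or.inr (Or.inr (Finset.disjoint_of_subset_right hTB hdisj.symm))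
      · exact Or.inl dset_subset_supp
    · exact Or.inr ((hsplit hT h0T).imp id fun h => h.symm)
  have hBD : B ∪ dset t r ∈ τ := by
    refine hτ.mem_of_forall (isTube_union_dset ht hB h0B hpB) fun T hT => ?_
    by_cases h0T : ([] : List ℕ) ∈ T
    · rcases hBmax T hT h0T with hTB | rfl
      · exact Or.inr (Or.inl (hTB.trans Finset.subset_union_left))
      · exact Or.inl (Finset.union_subset hB.subset_supp dset_subset_supp)
    rcases hτ.nestedOrDisjoint hT hBτ with hTB | hBT | hTB
    · exact Or.inr (Or.inl (hTB.trans Finset.subset_union_left))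
    · exact absurd (hBT h0B) h0T
    rcases hsplit hT h0T with hTD | hTD
    · exact Or.inr (Or.inl (hTD.trans Finset.subset_union_right))
    · exact Or.inr (Or.inr (Finset.disjoint_union_left.mpr ⟨hTB.symm, hTD.symm⟩))
  have hunion : B ∪ dset t r = t.supp :=
    (hBmax _ hBD (Finset.mem_union_left _ h0B)).resolve_left fun h =>
      hrB (h (Finset.mem_union_right _ (mem_dset_self hr)))
  refine ⟨r, hr, fun h => hrB (h ▸ h0B), hD, ?_⟩
  rwa [← hunion, Finset.union_sdiff_cancel_right hdisj]

theorem subset_or_subset_or_eq_of_nestedOrDisjoint {S : Finset (List ℕ)} (hS : S ⊆ t.supp)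
    (hD : NestedOrDisjoint S (dset t r)) (hB : NestedOrDisjoint S (t.supp \ dset t r)) :
    S ⊆ dset t r ∨ S ⊆ t.supp \ dset t r ∨ S = t.supp := by
  have hu : dset t r ∪ t.supp \ dset t r = t.supp :=
    Finset.union_sdiff_of_subset dset_subset_supp
  have h := hD.subset_or_subset_or_eq_union (hu.symm ▸ hS) hB
  rwa [hu] at h

theorem disjoint_of_subset_dset_of_subset_sdiff {S T : Finset (List ℕ)} (hS : S ⊆ dset t r)
    (hT : T ⊆ t.supp \ dset t r) : Disjoint S T :=
  Finset.disjoint_of_subset_left hS (Finset.disjoint_of_subset_right hT Finset.disjoint_sdiff)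

theorem IsSplit.subset_or_subset_or_eq (hsp : IsSplit t τ r) (hτ : IsBinaryTubing t τ)
    {S : Finset (List ℕ)} (hS : S ∈ τ) :
    S ⊆ dset t r ∨ S ⊆ t.supp \ dset t r ∨ S = t.supp :=
  subset_or_subset_or_eq_of_nestedOrDisjoint (hτ.isTube hS).subset_supp
    (hτ.nestedOrDisjoint hS hsp.dset_mem) (hτ.nestedOrDisjoint hS hsp.sdiff_dset_mem)

theorem IsSplit.prefix (ht : t.WF) (hτ : IsBinaryTubing t τ) {r' : List ℕ}
    (h : IsSplit t τ r) (h' : IsSplit t τ r') : r' <+: r := by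
  have hB : t.supp \ dset t r' ⊆ t.supp \ dset t r := by
    rcases h.subset_or_subset_or_eq hτ h'.sdiff_dset_mem with h1 | h1 | h1
    · exact absurd (h1 (nil_mem_sdiff_dset ht h'.ne_nil)) (nil_notMem_dset h.ne_nil)
    · exact h1
    · exact absurd (h1 ▸ h'.mem) (Finset.notMem_sdiff_of_mem_right (mem_dset_self h'.mem))
  by_contra hr
  exact Finset.notMem_sdiff_of_mem_right (mem_dset_self h.mem)
    (hB (Finset.mem_sdiff.mpr ⟨h.mem, fun hD => hr (mem_dset.mp hD).2⟩))

theorem IsSplit.eq (ht : t.WF) (hτ : IsBinaryTubing t τ) {r' : List ℕ}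
    (h : IsSplit t τ r) (h' : IsSplit t τ r') : r = r' :=
  (h'.prefix ht hτ h).eq_of_length_le (h.prefix ht hτ h').length_le

end Split

section Shift

variable {t : PreTree I E} {r : List ℕ} {S T : Finset (List ℕ)}

def shift (r : List ℕ) (S : Finset (List ℕ)) : Finset (List ℕ) :=
  S.map ⟨(r ++ ·), List.append_right_injective r⟩

theorem mem_shift {v : List ℕ} : v ∈ shift r S ↔ ∃ a ∈ S, r ++ a = v := Finset.mem_map

theorem append_mem_shift {a : List ℕ} : r ++ a ∈ shift r S ↔ a ∈ S := Finset.mem_map' _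

theorem prefix_of_mem_shift {v : List ℕ} (hv : v ∈ shift r S) : r <+: v := by
  obtain ⟨a, -, rfl⟩ := mem_shift.mp hv
  exact List.prefix_append r a

theorem shift_injective (r : List ℕ) : Function.Injective (shift r) := Finset.map_injective _

theorem shift_subset_shift : shift r S ⊆ shift r T ↔ S ⊆ T := Finset.map_subset_map

theorem shift_ssubset_shift : shift r S ⊂ shift r T ↔ S ⊂ T := Finset.map_ssubset_map

theorem nestedOrDisjoint_shift :
    NestedOrDisjoint (shift r S) (shift r T) ↔ NestedOrDisjoint S T :=
  nestedOrDisjoint_map_iff _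

theorem exists_shift_eq (h : ∀ v ∈ S, r <+: v) : ∃ S', shift r S' = S := by
  refine ⟨S.image (·.drop r.length), Finset.ext fun v => ⟨fun hv => ?_, fun hv => ?_⟩⟩
  · obtain ⟨a, ha, rfl⟩ := mem_shift.mp hv
    obtain ⟨w, hw, rfl⟩ := Finset.mem_image.mp ha
    obtain ⟨c, rfl⟩ := h w hw
    simpa using hw
  · obtain ⟨c, rfl⟩ := h v hv
    exact append_mem_shift.mpr (Finset.mem_image.mpr ⟨r ++ c, hv, by simp⟩)

theorem HasRoot.shift {ρ : List ℕ} (h : HasRoot S ρ) : HasRoot (shift r S) (r ++ ρ) := by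
  refine ⟨append_mem_shift.mpr h.1, fun v hv => ?_⟩
  obtain ⟨a, ha, rfl⟩ := mem_shift.mp hv
  exact (List.prefix_append_right_inj r).mpr (h.2 a ha)

theorem tubeRoot_shift {t' : PreTree I E} (h : IsTube t' S) :
    tubeRoot (shift r S) = r ++ tubeRoot S :=
  h.hasRoot.shift.tubeRoot_eq

theorem isUpsetIn_shift : IsUpsetIn (shift r S) (shift r T) ↔ IsUpsetIn S T := by
  constructor
  · intro h a ha b hb hba
    exact append_mem_shift.mp (h _ (append_mem_shift.mpr ha) _ (append_mem_shift.mpr hb)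
      ((List.prefix_append_right_inj r).mpr hba))
  · intro h x hx y hy hyx
    obtain ⟨a, ha, rfl⟩ := mem_shift.mp hx
    obtain ⟨b, hb, rfl⟩ := mem_shift.mp hy
    exact append_mem_shift.mpr (h a ha b hb ((List.prefix_append_right_inj r).mp hyx))

theorem isUpperTube_image_shift {t' : PreTree I E} {υ : Finset (Finset (List ℕ))} :
    IsUpperTube t (υ.image (shift r)) (shift r S) ↔ IsUpperTube t' υ S := by
  have hmem : ∀ {X}, shift r X ∈ υ.image (shift r) ↔ X ∈ υ :=
    (shift_injective r).mem_finset_image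
  simp only [IsUpperTube, Finset.exists_mem_image, Finset.forall_mem_image, hmem,
    shift_ssubset_shift, shift_subset_shift, isUpsetIn_shift]

theorem mem_subPre_supp (hr : r ∈ t.supp) {v : List ℕ} :
    v ∈ (subPre t r).supp ↔ r ++ v ∈ t.supp := by
  simp only [subPre, Finset.mem_insert, Finset.mem_image, Finset.mem_filter]
  constructor
  · rintro (rfl | ⟨w, ⟨hw, c, rfl⟩, rfl⟩)
    · simpa using hr
    · simpa using hw
  · exact fun h => Or.inr ⟨r ++ v, ⟨h, List.prefix_append r v⟩, by simp⟩

theorem shift_subPre_supp (hr : r ∈ t.supp) : shift r (subPre t r).supp = dset t r := by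
  ext v
  refine ⟨fun hv => ?_, fun hv => ?_⟩
  · obtain ⟨a, ha, rfl⟩ := mem_shift.mp hv
    exact mem_dset.mpr ⟨(mem_subPre_supp hr).mp ha, List.prefix_append r a⟩
  · obtain ⟨hvs, c, rfl⟩ := mem_dset.mp hv
    exact append_mem_shift.mpr ((mem_subPre_supp hr).mpr hvs)

theorem shift_subset_dset_iff : shift r S ⊆ dset t r ↔ shift r S ⊆ t.supp :=
  ⟨fun h => h.trans dset_subset_supp,
    fun h _ hv => mem_dset.mpr ⟨h hv, prefix_of_mem_shift hv⟩⟩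

theorem isTube_subPre_iff (hr : r ∈ t.supp) : IsTube (subPre t r) S ↔ IsTube t (shift r S) := by
  have hsub : S ⊆ (subPre t r).supp ↔ shift r S ⊆ t.supp := by
    rw [← shift_subset_shift (r := r), shift_subPre_supp hr, shift_subset_dset_iff]
  constructor
  · rintro ⟨hne, hS, ρ, hρ, hpre, hconv⟩
    refine ⟨hne.map, hsub.mp hS, r ++ ρ, (HasRoot.shift ⟨hρ, hpre⟩).1,
      (HasRoot.shift ⟨hρ, hpre⟩).2, fun v hv w hρw hwv => ?_⟩
    obtain ⟨a, ha, rfl⟩ := mem_shift.mp hv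
    obtain ⟨c, rfl⟩ := (List.prefix_append r ρ).trans hρw
    rw [List.prefix_append_right_inj] at hρw hwv
    exact append_mem_shift.mpr (hconv a ha c hρw hwv)
  · rintro ⟨hne, hS, ρ, hρ, hpre, hconv⟩
    obtain ⟨ρ', hρ', rfl⟩ := mem_shift.mp hρ
    refine ⟨Finset.map_nonempty.mp hne, hsub.mpr hS, ρ', hρ',
      fun v hv => (List.prefix_append_right_inj r).mp (hpre _ (append_mem_shift.mpr hv)),
      fun v hv w hρw hwv => append_mem_shift.mp (hconv _ (append_mem_shift.mpr hv) _ ?_ ?_)⟩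
    all_goals rwa [List.prefix_append_right_inj]

theorem supp_complPre_dset (ht : t.WF) (hr : r ≠ []) :
    (complPre t (dset t r)).supp = t.supp \ dset t r :=
  Finset.insert_eq_of_mem (nil_mem_sdiff_dset ht hr)

theorem isTube_complPre_iff (ht : t.WF) (hr : r ≠ []) :
    IsTube (complPre t (dset t r)) S ↔ IsTube t S ∧ S ⊆ t.supp \ dset t r := by
  unfold IsTube
  rw [supp_complPre_dset ht hr]
  exact ⟨fun ⟨h1, h2, h3⟩ => ⟨⟨h1, h2.trans Finset.sdiff_subset, h3⟩, h2⟩,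
    fun ⟨⟨h1, _, h3⟩, h2⟩ => ⟨h1, h2, h3⟩⟩

end Shift

section Parts

variable {t : PreTree I E} {τ τ₁ τ₂ : Finset (Finset (List ℕ))} {r : List ℕ}
  {S : Finset (List ℕ)}

noncomputable def lowerPart (τ : Finset (Finset (List ℕ))) (r : List ℕ) :
    Finset (Finset (List ℕ)) :=
  τ.preimage (shift r) (shift_injective r).injOn

def upperPart (t : PreTree I E) (τ : Finset (Finset (List ℕ))) (r : List ℕ) :
    Finset (Finset (List ℕ)) :=
  τ.filter (· ⊆ t.supp \ dset t r)

def glue (t : PreTree I E) (r : List ℕ) (τ₁ τ₂ : Finset (Finset (List ℕ))) :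
    Finset (Finset (List ℕ)) :=
  insert t.supp (τ₂ ∪ τ₁.image (shift r))

theorem mem_lowerPart : S ∈ lowerPart τ r ↔ shift r S ∈ τ := Finset.mem_preimage

theorem mem_upperPart : S ∈ upperPart t τ r ↔ S ∈ τ ∧ S ⊆ t.supp \ dset t r :=
  Finset.mem_filter

theorem mem_glue : S ∈ glue t r τ₁ τ₂ ↔
    S = t.supp ∨ S ∈ τ₂ ∨ ∃ S' ∈ τ₁, shift r S' = S := by
  simp only [glue, Finset.mem_insert, Finset.mem_union, Finset.mem_image]

theorem IsBinaryTubing.image_shift_lowerPart (hτ : IsBinaryTubing t τ) :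
    (lowerPart τ r).image (shift r) = τ.filter (· ⊆ dset t r) := by
  ext S
  simp only [Finset.mem_image, Finset.mem_filter, mem_lowerPart]
  constructor
  · rintro ⟨S', hS', rfl⟩
    exact ⟨hS', shift_subset_dset_iff.mpr (hτ.isTube hS').subset_supp⟩
  · rintro ⟨hS, hSD⟩
    obtain ⟨S', rfl⟩ := exists_shift_eq fun v hv => (mem_dset.mp (hSD hv)).2
    exact ⟨S', hS, rfl⟩

theorem IsSplit.isBinaryTubing_lowerPart (hsp : IsSplit t τ r) (hτ : IsBinaryTubing t τ) :
    IsBinaryTubing (subPre t r) (lowerPart τ r) := by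
  refine isBinaryTubing_iff.mpr ⟨fun S hS => (isTube_subPre_iff hsp.mem).mpr
      (hτ.isTube (mem_lowerPart.mp hS)), fun S hS T hT => nestedOrDisjoint_shift.mp
      (hτ.nestedOrDisjoint (mem_lowerPart.mp hS) (mem_lowerPart.mp hT)),
    fun S hS hcompat => mem_lowerPart.mpr ?_⟩
  have hS' := (isTube_subPre_iff hsp.mem).mp hS
  refine hτ.mem_of_forall hS' fun T hT => ?_
  rcases hsp.subset_or_subset_or_eq hτ hT with hTD | hTB | rfl
  · obtain ⟨T', rfl⟩ := exists_shift_eq fun v hv => (mem_dset.mp (hTD hv)).2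
    exact nestedOrDisjoint_shift.mpr (hcompat T' (mem_lowerPart.mpr hT))
  · exact Or.inr (Or.inr (disjoint_of_subset_dset_of_subset_sdiff
      (shift_subset_dset_iff.mpr hS'.subset_supp) hTB))
  · exact Or.inl hS'.subset_supp

theorem IsSplit.isBinaryTubing_upperPart (hsp : IsSplit t τ r) (ht : t.WF)
    (hτ : IsBinaryTubing t τ) : IsBinaryTubing (complPre t (dset t r)) (upperPart t τ r) := by
  refine isBinaryTubing_iff.mpr ⟨fun S hS => (isTube_complPre_iff ht hsp.ne_nil).mpr
      ⟨hτ.isTube (mem_upperPart.mp hS).1, (mem_upperPart.mp hS).2⟩,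
    fun S hS T hT => hτ.nestedOrDisjoint (mem_upperPart.mp hS).1 (mem_upperPart.mp hT).1,
    fun S hS hcompat => ?_⟩
  obtain ⟨hSt, hSB⟩ := (isTube_complPre_iff ht hsp.ne_nil).mp hS
  refine mem_upperPart.mpr ⟨hτ.mem_of_forall hSt fun T hT => ?_, hSB⟩
  rcases hsp.subset_or_subset_or_eq hτ hT with hTD | hTB | rfl
  · exact Or.inr (Or.inr (disjoint_of_subset_dset_of_subset_sdiff hTD hSB).symm)
  · exact hcompat T (mem_upperPart.mpr ⟨hT, hTB⟩)
  · exact Or.inl hSt.subset_supp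

section Glue

variable (ht : t.WF) (hr : r ∈ t.supp) (hr0 : r ≠ [])
  (h₁ : IsBinaryTubing (subPre t r) τ₁) (h₂ : IsBinaryTubing (complPre t (dset t r)) τ₂)

include hr h₁ in
theorem isTube_shift_of_mem {S' : Finset (List ℕ)} (hS' : S' ∈ τ₁) :
    IsTube t (shift r S') ∧ shift r S' ⊆ dset t r :=
  have h := (isTube_subPre_iff hr).mp (h₁.isTube hS')
  ⟨h, shift_subset_dset_iff.mpr h.subset_supp⟩

include ht hr0 h₂ in
theorem isTube_of_mem_complPre (hS : S ∈ τ₂) : IsTube t S ∧ S ⊆ t.supp \ dset t r :=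
  (isTube_complPre_iff ht hr0).mp (h₂.isTube hS)

include ht hr h₁ in
theorem dset_mem_glue : dset t r ∈ glue t r τ₁ τ₂ :=
  mem_glue.mpr (Or.inr (Or.inr ⟨_, h₁.supp_mem (subPre_wf t ht r), shift_subPre_supp hr⟩))

include ht hr0 h₂ in
theorem sdiff_dset_mem_glue : t.supp \ dset t r ∈ glue t r τ₁ τ₂ := by
  have hwf := complPre_wf t ht (dset t r) fun v hv w hw hvw =>
    mem_dset.mpr ⟨hw, (mem_dset.mp hv).2.trans hvw⟩
  exact mem_glue.mpr (Or.inr (Or.inl (supp_complPre_dset ht hr0 ▸ h₂.supp_mem hwf)))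

include ht hr hr0 h₁ h₂ in
theorem laminar_glue : Laminar (glue t r τ₁ τ₂) := by
  have hsub : ∀ X ∈ glue t r τ₁ τ₂, X ⊆ t.supp := by
    intro X hX
    rcases mem_glue.mp hX with rfl | hX | ⟨X', hX', rfl⟩
    exacts [subset_rfl, (isTube_of_mem_complPre ht hr0 h₂ hX).1.subset_supp,
      (isTube_shift_of_mem hr h₁ hX').1.subset_supp]
  intro X hX Y hY
  rcases mem_glue.mp hX with rfl | hX' | ⟨X', hX', rfl⟩
  · exact Or.inr (Or.inl (hsub Y hY))
  all_goals rcases mem_glue.mp hY with rfl | hY' | ⟨Y', hY', rfl⟩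
  · exact Or.inl (hsub _ hX)
  · exact h₂.nestedOrDisjoint hX' hY'
  · exact Or.inr (Or.inr (disjoint_of_subset_dset_of_subset_sdiff
      (isTube_shift_of_mem hr h₁ hY').2 (isTube_of_mem_complPre ht hr0 h₂ hX').2).symm)
  · exact Or.inl (hsub _ hX)
  · exact Or.inr (Or.inr (disjoint_of_subset_dset_of_subset_sdiff
      (isTube_shift_of_mem hr h₁ hX').2 (isTube_of_mem_complPre ht hr0 h₂ hY').2))
  · exact nestedOrDisjoint_shift.mpr (h₁.nestedOrDisjoint hX' hY')

include ht hr hr0 h₁ h₂ in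
theorem isBinaryTubing_glue : IsBinaryTubing t (glue t r τ₁ τ₂) := by
  refine isBinaryTubing_iff.mpr ⟨fun S hS => ?_, laminar_glue ht hr hr0 h₁ h₂,
    fun S hS hcompat => ?_⟩
  · rcases mem_glue.mp hS with rfl | hS | ⟨S', hS', rfl⟩
    exacts [isTube_supp ht, (isTube_of_mem_complPre ht hr0 h₂ hS).1,
      (isTube_shift_of_mem hr h₁ hS').1]
  rcases subset_or_subset_or_eq_of_nestedOrDisjoint hS.subset_supp
    (hcompat _ (dset_mem_glue ht hr h₁)) (hcompat _ (sdiff_dset_mem_glue ht hr0 h₂))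
    with hSD | hSB | rfl
  · obtain ⟨S', rfl⟩ := exists_shift_eq fun v hv => (mem_dset.mp (hSD hv)).2
    refine mem_glue.mpr (Or.inr (Or.inr ⟨S', ?_, rfl⟩))
    exact h₁.mem_of_forall ((isTube_subPre_iff hr).mpr hS) fun T' hT' =>
      nestedOrDisjoint_shift.mp (hcompat _ (mem_glue.mpr (Or.inr (Or.inr ⟨T', hT', rfl⟩))))
  · refine mem_glue.mpr (Or.inr (Or.inl ?_))
    exact h₂.mem_of_forall ((isTube_complPre_iff ht hr0).mpr ⟨hS, hSB⟩) fun T hT =>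
      hcompat T (mem_glue.mpr (Or.inr (Or.inl hT)))
  · exact mem_glue.mpr (Or.inl rfl)

include ht hr hr0 h₁ h₂ in
theorem isSplit_glue : IsSplit t (glue t r τ₁ τ₂) r :=
  ⟨hr, hr0, dset_mem_glue ht hr h₁, sdiff_dset_mem_glue ht hr0 h₂⟩

include ht hr0 h₂ in
theorem lowerPart_glue : lowerPart (glue t r τ₁ τ₂) r = τ₁ := by
  ext S'
  rw [mem_lowerPart, mem_glue]
  refine ⟨fun h => ?_, fun h => Or.inr (Or.inr ⟨S', h, rfl⟩)⟩
  rcases h with h | h | ⟨T', hT', hT'eq⟩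
  · exact absurd (List.prefix_nil.mp (prefix_of_mem_shift (h ▸ ht.1))) hr0
  · obtain ⟨hS, hSB⟩ := isTube_of_mem_complPre ht hr0 h₂ h
    obtain ⟨x, hx⟩ := hS.1
    exact absurd (mem_dset.mpr ⟨hS.subset_supp hx, prefix_of_mem_shift hx⟩)
      (Finset.mem_sdiff.mp (hSB hx)).2
  · exact shift_injective r hT'eq ▸ hT'

include ht hr hr0 h₁ h₂ in
theorem upperPart_glue : upperPart t (glue t r τ₁ τ₂) r = τ₂ := by
  ext S
  rw [mem_upperPart, mem_glue]
  refine ⟨fun ⟨h, hSB⟩ => ?_, fun h => ⟨Or.inr (Or.inl h),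
    (isTube_of_mem_complPre ht hr0 h₂ h).2⟩⟩
  rcases h with rfl | h | ⟨S', hS', rfl⟩
  · exact absurd (mem_dset_self hr) (Finset.mem_sdiff.mp (hSB hr)).2
  · exact h
  · obtain ⟨hS, hSD⟩ := isTube_shift_of_mem hr h₁ hS'
    obtain ⟨x, hx⟩ := hS.1
    exact absurd (hSD hx) (Finset.mem_sdiff.mp (hSB hx)).2

end Glue

theorem IsSplit.glue_lowerPart_upperPart (hsp : IsSplit t τ r) (ht : t.WF)
    (hτ : IsBinaryTubing t τ) : glue t r (lowerPart τ r) (upperPart t τ r) = τ := by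
  ext S
  rw [mem_glue, mem_upperPart]
  constructor
  · rintro (rfl | ⟨hS, -⟩ | ⟨S', hS', rfl⟩)
    exacts [hτ.supp_mem ht, hS, mem_lowerPart.mp hS']
  · intro hS
    rcases hsp.subset_or_subset_or_eq hτ hS with hSD | hSB | rfl
    · obtain ⟨S', rfl⟩ := exists_shift_eq fun v hv => (mem_dset.mp (hSD hv)).2
      exact Or.inr (Or.inr ⟨S', mem_lowerPart.mpr hS, rfl⟩)
    · exact Or.inr (Or.inl ⟨hS, hSB⟩)
    · exact Or.inl rfl

end Parts

section Ranks

variable {t t' : PreTree I E} {τ υ : Finset (Finset (List ℕ))} {r : List ℕ}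
  {S M : Finset (List ℕ)}

theorem not_isUpperTube_of_forall_subset (h : ∀ T ∈ τ, T ⊆ M) : ¬ IsUpperTube t τ M := by
  rintro ⟨-, T, hT, hMT, -, -⟩
  exact not_subset_of_ssubset hMT (h T hT)

theorem IsBinaryTubing.not_isUpperTube_supp (hτ : IsBinaryTubing t τ) :
    ¬ IsUpperTube t' τ t.supp :=
  not_isUpperTube_of_forall_subset fun _ hT => (hτ.isTube hT).subset_supp

theorem isUpperTube_iff_of_subset (hυ : υ ⊆ τ) (hS : S ∈ υ) (hM : M ∈ υ) (hSM : S ⊂ M)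
    (h : ∀ U ∈ τ, S ⊂ U → U ∈ υ ∨ M ⊆ U) :
    IsUpperTube t τ S ↔ IsUpperTube t' υ S := by
  constructor
  · rintro ⟨-, T, hT, hST, hmin, hup⟩
    have hTυ : T ∈ υ := by
      rcases h T hT hST with hTυ | hMT
      · exact hTυ
      · rwa [(hmin M (hυ hM) hSM).antisymm hMT]
    exact ⟨hS, T, hTυ, hST, fun U hU => hmin U (hυ hU), hup⟩
  · rintro ⟨-, T, hT, hST, hmin, hup⟩
    refine ⟨hυ hS, T, hυ hT, hST, fun U hU hSU => ?_, hup⟩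
    rcases h U hU hSU with hUυ | hMU
    · exact hmin U hUυ hSU
    · exact (hmin M hM hSM).trans hMU

section OfSplit

variable (hsp : IsSplit t τ r) (ht : t.WF) (hτ : IsBinaryTubing t τ)
include hsp ht hτ

theorem IsSplit.not_isUpperTube_dset : ¬ IsUpperTube t' τ (dset t r) := by
  rintro ⟨-, T, hT, hDT, -, hup⟩
  rcases hsp.subset_or_subset_or_eq hτ hT with hTD | hTB | rfl
  · exact not_subset_of_ssubset hDT hTD
  · exact (Finset.mem_sdiff.mp (hTB (hDT.subset (mem_dset_self hsp.mem)))).2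
      (mem_dset_self hsp.mem)
  · exact nil_notMem_dset hsp.ne_nil (hup r (mem_dset_self hsp.mem) [] ht.1 List.nil_prefix)

theorem IsSplit.isUpperTube_sdiff_dset : IsUpperTube t' τ (t.supp \ dset t r) := by
  refine ⟨hsp.sdiff_dset_mem, t.supp, hτ.supp_mem ht,
    Finset.sdiff_ssubset dset_subset_supp ⟨r, mem_dset_self hsp.mem⟩, fun U hU hBU => ?_,
    fun a ha b hb hba => Finset.mem_sdiff.mpr ⟨hb, fun hbD => ?_⟩⟩
  · rcases hsp.subset_or_subset_or_eq hτ hU with hUD | hUB | rfl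
    · exact absurd (hUD (hBU.subset (nil_mem_sdiff_dset ht hsp.ne_nil)))
        (nil_notMem_dset hsp.ne_nil)
    · exact absurd hUB (not_subset_of_ssubset hBU)
    · exact subset_rfl
  · exact (Finset.mem_sdiff.mp ha).2
      (mem_dset.mpr ⟨(Finset.mem_sdiff.mp ha).1, (mem_dset.mp hbD).2.trans hba⟩)

theorem IsSplit.isUpperTube_iff_upperPart (hS : S ∈ upperPart t τ r) :
    IsUpperTube t τ S ↔ IsUpperTube t' (upperPart t τ r) S ∨ S = t.supp \ dset t r := by
  obtain ⟨hSτ, hSB⟩ := mem_upperPart.mp hS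
  rcases eq_or_ne S (t.supp \ dset t r) with rfl | hne
  · exact iff_of_true (hsp.isUpperTube_sdiff_dset ht hτ) (Or.inr rfl)
  rw [or_iff_left hne]
  refine isUpperTube_iff_of_subset (Finset.filter_subset _ _) hS
    (mem_upperPart.mpr ⟨hsp.sdiff_dset_mem, subset_rfl⟩) (hSB.ssubset_of_ne hne)
    fun U hU hSU => ?_
  rcases hsp.subset_or_subset_or_eq hτ hU with hUD | hUB | rfl
  · obtain ⟨x, hx⟩ := (hτ.isTube hSτ).1
    exact absurd (hSB hx) (Finset.disjoint_left.mp Finset.disjoint_sdiff (hUD (hSU.subset hx)))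
  · exact Or.inl (mem_upperPart.mpr ⟨hU, hUB⟩)
  · exact Or.inr Finset.sdiff_subset

theorem IsSplit.isUpperTube_shift_iff {S' : Finset (List ℕ)} (hS' : S' ∈ lowerPart τ r) :
    IsUpperTube t τ (shift r S') ↔ IsUpperTube t' (lowerPart τ r) S' := by
  rw [← isUpperTube_image_shift (t := t) (υ := lowerPart τ r), hτ.image_shift_lowerPart]
  have hS := mem_lowerPart.mp hS'
  have hSD : shift r S' ⊆ dset t r := shift_subset_dset_iff.mpr (hτ.isTube hS).subset_supp
  rcases eq_or_ne (shift r S') (dset t r) with heq | hne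
  · rw [heq]
    exact iff_of_false (hsp.not_isUpperTube_dset ht hτ)
      (not_isUpperTube_of_forall_subset fun T hT => (Finset.mem_filter.mp hT).2)
  refine isUpperTube_iff_of_subset (Finset.filter_subset _ _) (Finset.mem_filter.mpr ⟨hS, hSD⟩)
    (Finset.mem_filter.mpr ⟨hsp.dset_mem, subset_rfl⟩) (hSD.ssubset_of_ne hne)
    fun U hU hSU => ?_
  rcases hsp.subset_or_subset_or_eq hτ hU with hUD | hUB | rfl
  · exact Or.inl (Finset.mem_filter.mpr ⟨hU, hUD⟩)
  · obtain ⟨x, hx⟩ := (hτ.isTube hS).1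
    exact absurd (hUB (hSU.subset hx)) (Finset.disjoint_left.mp Finset.disjoint_sdiff (hSD hx))
  · exact Or.inr dset_subset_supp

theorem IsSplit.rank_append (v : List ℕ) :
    rank t τ (r ++ v) = rank (subPre t r) (lowerPart τ r) v := by
  have hlow := hsp.isBinaryTubing_lowerPart hτ
  suffices h : τ.filter (fun S => IsUpperTube t τ S ∧ tubeRoot S = r ++ v) =
      ((lowerPart τ r).filter fun S' =>
        IsUpperTube (subPre t r) (lowerPart τ r) S' ∧ tubeRoot S' = v).image
        (shift r) by
    rw [rank, rank, h, Finset.card_image_of_injective _ (shift_injective r)]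
  ext S
  simp only [Finset.mem_filter, Finset.mem_image]
  constructor
  · rintro ⟨hS, hup, hroot⟩
    have hvS : r ++ v ∈ S := hroot ▸ (hτ.isTube hS).hasRoot.1
    have hSD : S ⊆ dset t r := by
      rcases hsp.subset_or_subset_or_eq hτ hS with hSD | hSB | rfl
      · exact hSD
      · exact absurd (mem_dset.mpr ⟨(hτ.isTube hS).subset_supp hvS, List.prefix_append r v⟩)
          (Finset.mem_sdiff.mp (hSB hvS)).2
      · exact absurd hup hτ.not_isUpperTube_supp
    obtain ⟨S', rfl⟩ := exists_shift_eq fun w hw => (mem_dset.mp (hSD hw)).2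
    have hS' : S' ∈ lowerPart τ r := mem_lowerPart.mpr hS
    refine ⟨S', ⟨hS', (hsp.isUpperTube_shift_iff ht hτ hS').mp hup, ?_⟩, rfl⟩
    exact List.append_cancel_left ((tubeRoot_shift (hlow.isTube hS')).symm.trans hroot)
  · rintro ⟨S', ⟨hS', hup, hroot⟩, rfl⟩
    exact ⟨mem_lowerPart.mp hS', (hsp.isUpperTube_shift_iff ht hτ hS').mpr hup,
      hroot ▸ tubeRoot_shift (hlow.isTube hS')⟩

theorem IsSplit.rank_of_notMem_dset {v : List ℕ} (hv : v ∉ dset t r) :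
    rank t τ v = rank (complPre t (dset t r)) (upperPart t τ r) v + if v = [] then 1 else 0 := by
  set B := t.supp \ dset t r
  have h : τ.filter (fun S => IsUpperTube t τ S ∧ tubeRoot S = v) =
      (upperPart t τ r).filter (fun S =>
        IsUpperTube (complPre t (dset t r)) (upperPart t τ r) S ∧ tubeRoot S = v) ∪
        ({B} : Finset _).filter (tubeRoot · = v) := by
    ext S
    simp only [Finset.mem_filter, Finset.mem_union, Finset.mem_singleton]
    constructor
    · rintro ⟨hS, hup, hroot⟩
      have hvS : v ∈ S := hroot ▸ (hτ.isTube hS).hasRoot.1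
      rcases hsp.subset_or_subset_or_eq hτ hS with hSD | hSB | rfl
      · exact absurd (hSD hvS) hv
      · have hSu := mem_upperPart.mpr ⟨hS, hSB⟩
        exact ((hsp.isUpperTube_iff_upperPart ht hτ hSu).mp hup).imp
          (fun h => ⟨hSu, h, hroot⟩) fun h => ⟨h, hroot⟩
      · exact absurd hup hτ.not_isUpperTube_supp
    · rintro (⟨hSu, hup, hroot⟩ | ⟨rfl, hroot⟩)
      · exact ⟨(mem_upperPart.mp hSu).1,
          (hsp.isUpperTube_iff_upperPart ht hτ hSu).mpr (Or.inl hup), hroot⟩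
      · exact ⟨hsp.sdiff_dset_mem, hsp.isUpperTube_sdiff_dset ht hτ, hroot⟩
  have hdisj : Disjoint
      ((upperPart t τ r).filter fun S =>
        IsUpperTube (complPre t (dset t r)) (upperPart t τ r) S ∧ tubeRoot S = v)
      (({B} : Finset _).filter (tubeRoot · = v)) := by
    refine Finset.disjoint_right.mpr fun S hS hS' => ?_
    rw [Finset.mem_singleton.mp (Finset.mem_filter.mp hS).1] at hS'
    exact not_isUpperTube_of_forall_subset (fun T hT => (mem_upperPart.mp hT).2)
      (Finset.mem_filter.mp hS').2.1
  have hrootB : tubeRoot B = [] :=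
    HasRoot.tubeRoot_eq ⟨nil_mem_sdiff_dset ht hsp.ne_nil, fun _ _ => List.nil_prefix⟩
  rw [rank, rank, h, Finset.card_union_of_disjoint hdisj, Finset.filter_singleton, hrootB]
  by_cases hv0 : v = []
  · simp [hv0]
  · simp [hv0, Ne.symm hv0]

theorem IsSplit.bstat_eq : bstat τ = bstat (upperPart t τ r) + 1 := by
  have h : τ.filter (fun S => ([] : List ℕ) ∈ S) =
      insert t.supp ((upperPart t τ r).filter fun S => ([] : List ℕ) ∈ S) := by
    ext S
    simp only [Finset.mem_filter, Finset.mem_insert, mem_upperPart]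
    constructor
    · rintro ⟨hS, h0⟩
      rcases hsp.subset_or_subset_or_eq hτ hS with hSD | hSB | rfl
      · exact absurd (hSD h0) (nil_notMem_dset hsp.ne_nil)
      · exact Or.inr ⟨⟨hS, hSB⟩, h0⟩
      · exact Or.inl rfl
    · rintro (rfl | ⟨⟨hS, -⟩, h0⟩)
      exacts [⟨hτ.supp_mem ht, ht.1⟩, ⟨hS, h0⟩]
  rw [bstat, bstat, h, Finset.card_insert_of_notMem]
  intro hmem
  exact (Finset.mem_sdiff.mp ((mem_upperPart.mp (Finset.mem_filter.mp hmem).1).2 hsp.mem)).2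
    (mem_dset_self hsp.mem)

end OfSplit

end Ranks

section Bijection

variable {t : PreTree I E}

/-- The triples `(t', τ', τ'')`, the proper subtree `t'` being given by its root `r`. -/
abbrev SplitTriple (t : PreTree I E) : Type :=
  Σ r : {r : List ℕ // r ∈ t.supp ∧ r ≠ []},
    {τ' : Finset (Finset (List ℕ)) // IsBinaryTubing (subPre t r.1) τ'} ×
    {τ'' : Finset (Finset (List ℕ)) // IsBinaryTubing (complPre t (dset t r.1)) τ''}

theorem SplitTriple.ext {x y : SplitTriple t} (h₀ : x.1.1 = y.1.1) (h₁ : x.2.1.1 = y.2.1.1)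
    (h₂ : x.2.2.1 = y.2.2.1) : x = y := by
  obtain ⟨⟨r, hr⟩, ⟨τ₁, p₁⟩, ⟨τ₂, p₂⟩⟩ := x
  obtain ⟨⟨r', hr'⟩, ⟨τ₁', p₁'⟩, ⟨τ₂', p₂'⟩⟩ := y
  dsimp only at h₀ h₁ h₂
  subst h₀ h₁ h₂
  rfl

noncomputable def splitRoot (ht : t.WF) (hbig : 1 < t.supp.card)
    (τ : {τ // IsBinaryTubing t τ}) : List ℕ :=
  (τ.2.exists_isSplit ht hbig).choose

theorem isSplit_splitRoot (ht : t.WF) (hbig : 1 < t.supp.card)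
    (τ : {τ // IsBinaryTubing t τ}) : IsSplit t τ.1 (splitRoot ht hbig τ) :=
  (τ.2.exists_isSplit ht hbig).choose_spec

noncomputable def splitEquiv (ht : t.WF) (hbig : 1 < t.supp.card) :
    {τ // IsBinaryTubing t τ} ≃ SplitTriple t where
  toFun τ :=
    ⟨⟨splitRoot ht hbig τ, (isSplit_splitRoot ht hbig τ).mem,
        (isSplit_splitRoot ht hbig τ).ne_nil⟩,
      ⟨lowerPart τ.1 _, (isSplit_splitRoot ht hbig τ).isBinaryTubing_lowerPart τ.2⟩,
      ⟨upperPart t τ.1 _, (isSplit_splitRoot ht hbig τ).isBinaryTubing_upperPart ht τ.2⟩⟩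
  invFun x :=
    ⟨glue t x.1.1 x.2.1.1 x.2.2.1, isBinaryTubing_glue ht x.1.2.1 x.1.2.2 x.2.1.2 x.2.2.2⟩
  left_inv τ := Subtype.ext ((isSplit_splitRoot ht hbig τ).glue_lowerPart_upperPart ht τ.2)
  right_inv := by
    rintro ⟨⟨r, hr, hr0⟩, ⟨τ₁, h₁⟩, ⟨τ₂, h₂⟩⟩
    have hglue := isBinaryTubing_glue ht hr hr0 h₁ h₂
    have hroot : splitRoot ht hbig ⟨glue t r τ₁ τ₂, hglue⟩ = r :=
      (isSplit_splitRoot ht hbig ⟨_, hglue⟩).eq ht hglue (isSplit_glue ht hr hr0 h₁ h₂)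
    refine SplitTriple.ext hroot ?_ ?_
    · change lowerPart (glue t r τ₁ τ₂) (splitRoot ht hbig _) = τ₁
      rw [hroot, lowerPart_glue ht hr0 h₂]
    · change upperPart t (glue t r τ₁ τ₂) (splitRoot ht hbig _) = τ₂
      rw [hroot, upperPart_glue ht hr hr0 h₁ h₂]

end Bijection

/-- Let `t` be a finite rooted tree with more than one vertex.  There
is a bijection between binary tubings `τ` of `t` and triples `(t', τ', τ'')` where `t'`
is a proper subtree of `t` (a principal downset, determined by its root `r ≠ []`),
`τ' ∈ Tub(t')` and `τ'' ∈ Tub(t∖t')`; moreover `rk(τ,v) = rk(τ',v)` for `v ∈ t'`,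
`rk(τ,rt t) = rk(τ'',rt t) + 1`, `rk(τ,v) = rk(τ'',v)` for the other vertices of
`t∖t'`, and `b(τ) = b(τ'') + 1`. -/
theorem statement_16 (t : PreTree Unit (fun _ => Unit)) (ht : t.WF)
    (hbig : 1 < t.supp.card) :
    ∃ F : {τ : Finset (Finset (List ℕ)) // IsBinaryTubing t τ} ≃
      (Σ r : {r : List ℕ // r ∈ t.supp ∧ r ≠ []},
        {τ' : Finset (Finset (List ℕ)) // IsBinaryTubing (subPre t r.1) τ'} ×
        {τ'' : Finset (Finset (List ℕ)) //
          IsBinaryTubing (complPre t (t.supp.filter (r.1 <+: ·))) τ''}),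
      ∀ τh : {τ : Finset (Finset (List ℕ)) // IsBinaryTubing t τ},
        -- ranks in the subtree `t'` (addresses relative to its root `r`):
        (∀ v' ∈ (subPre t (F τh).1.1).supp,
          rank t τh.1 ((F τh).1.1 ++ v') = rank (subPre t (F τh).1.1) (F τh).2.1.1 v') ∧
        -- rank of the root of `t`:
        rank t τh.1 [] =
          rank (complPre t (t.supp.filter ((F τh).1.1 <+: ·))) (F τh).2.2.1 [] + 1 ∧
        -- ranks of the other vertices of `t ∖ t'`:
        (∀ v ∈ (complPre t (t.supp.filter ((F τh).1.1 <+: ·))).supp, v ≠ [] →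
          rank t τh.1 v =
            rank (complPre t (t.supp.filter ((F τh).1.1 <+: ·))) (F τh).2.2.1 v) ∧
        -- the `b`-statistic:
        bstat τh.1 = bstat (F τh).2.2.1 + 1 := by
  refine ⟨splitEquiv ht hbig, fun τ => ?_⟩
  have hsp := isSplit_splitRoot ht hbig τ
  refine ⟨fun v _ => hsp.rank_append ht τ.2 v, ?_, fun v hv hv0 => ?_, hsp.bstat_eq ht τ.2⟩
  · have h := hsp.rank_of_notMem_dset ht τ.2 (nil_notMem_dset hsp.ne_nil)
    rwa [if_pos rfl] at h
  · have h := hsp.rank_of_notMem_dset ht τ.2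
      (Finset.mem_sdiff.mp (supp_complPre_dset ht hsp.ne_nil ▸ hv)).2
    rwa [if_neg hv0, add_zero] at h

end CK
end
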